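/- arXiv:1702.08223 — 10 statements merged into one kernel-verified Lean document; each statement's English description precedes it below -/
import Mathlib

section
/- Let (e, f) be a hyperbolic pair over ℂ, and set v := (e + f)/√2 and w := −i(e − f)/√2 (i = Complex.I), so that Q v = 1, Q w = 1 and polar Q v w = 0. Then 1 − ι e * ι f = i * ι v * ι w in the Clifford algebra. (This expresses the factor 1 − e f of the element Σ₂ₙ as a product of two orthogonal unit vectors, up to the scalar i.) -/
/-! Since `e` and `f` are isotropic with `polar Q e f = 2`, in the Clifford algebra
`ι (e + f) * ι (e - f) = 2 - 2 • (ι e * ι f)`, and the scalar `i * (1/√2) * (-i/√2)` is `1/2`. -/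

open CliffordAlgebra QuadraticMap

namespace QuadraticMap

variable {R M N : Type*} [CommRing R] [AddCommGroup M] [Module R M] [AddCommGroup N] [Module R N]
  (Q : QuadraticMap R M N)

theorem map_sub_eq_add_sub_polar (x y : M) : Q (x - y) = Q x + Q y - polar Q x y := by
  rw [sub_eq_add_neg, QuadraticMap.map_add Q, Q.map_neg, polar_neg_right, ← sub_eq_add_neg]

theorem polar_add_sub (x y : M) : polar Q (x + y) (x - y) = 2 • Q x - 2 • Q y := by
  rw [polar_add_left, polar_sub_right, polar_sub_right, polar_self, polar_self, polar_comm Q y x]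
  abel

end QuadraticMap

namespace CliffordAlgebra

variable {R M : Type*} [CommRing R] [AddCommGroup M] [Module R M] (Q : QuadraticForm R M)

theorem ι_add_mul_ι_sub (x y : M) :
    ι Q (x + y) * ι Q (x - y) =
      algebraMap R _ (Q x - Q y + polar Q x y) - 2 • (ι Q x * ι Q y) := by
  rw [map_add, map_sub, add_mul, mul_sub, mul_sub, ι_sq_scalar, ι_sq_scalar,
    ι_mul_ι_comm (Q := Q) y x, polar_comm, map_add, map_sub]
  abel

end CliffordAlgebra

theorem Complex.ofReal_sqrt_two_inv_mul_self :
    ((Real.sqrt 2 : ℂ))⁻¹ * ((Real.sqrt 2 : ℂ))⁻¹ = 2⁻¹ := by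
  rw [← mul_inv, ← Complex.ofReal_mul, Real.mul_self_sqrt zero_le_two, Complex.ofReal_ofNat]

/-- For a hyperbolic pair `(e, f)` over `ℂ`, setting `v = (e + f)/√2` and
`w = -i(e - f)/√2`, one has `Q v = 1`, `Q w = 1`, `polar Q v w = 0`, and
`1 - ι e * ι f = i • (ι v * ι w)` in the Clifford algebra. -/
theorem one_sub_ef_eq_i_vw {V : Type*} [AddCommGroup V] [Module ℂ V]
    (Q : QuadraticForm ℂ V) (e f : V)
    (hQe : Q e = 0) (hQf : Q f = 0) (hef : polar Q e f = 2)
    (v w : V)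
    (hv : v = ((Real.sqrt 2 : ℂ))⁻¹ • (e + f))
    (hw : w = (-Complex.I * ((Real.sqrt 2 : ℂ))⁻¹) • (e - f)) :
    Q v = 1 ∧ Q w = 1 ∧ polar Q v w = 0 ∧
      1 - ι Q e * ι Q f = Complex.I • (ι Q v * ι Q w) := by
  have hs := Complex.ofReal_sqrt_two_inv_mul_self
  have hI := Complex.I_mul_I
  subst hv hw
  refine ⟨?_, ?_, ?_, ?_⟩
  · rw [Q.map_smul, QuadraticMap.map_add Q, hQe, hQf, hef, hs, smul_eq_mul]
    norm_num
  · rw [Q.map_smul, map_sub_eq_add_sub_polar, hQe, hQf, hef, smul_eq_mul]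
    linear_combination (-2 * Complex.I * Complex.I) * hs - hI
  · rw [polar_smul_left, polar_smul_right, polar_add_sub, hQe, hQf]
    simp
  · have hc :
        Complex.I * (((Real.sqrt 2 : ℂ))⁻¹ * (-Complex.I * ((Real.sqrt 2 : ℂ))⁻¹)) = 2⁻¹ := by
      linear_combination (-Complex.I * Complex.I) * hs - hI / 2
    rw [map_smul, map_smul, smul_mul_smul_comm, ι_add_mul_ι_sub, hQe, hQf, hef, smul_smul, hc,
      sub_self, zero_add, Algebra.algebraMap_eq_smul_one]
    module
end

section
/- Let (e_j, f_j), j = 1, …, n, be pairwise orthogonal hyperbolic pairs, and set Σ₂ₙ := i^n * ∏_{j=1}^n (1 − ι e_j * ι f_j) (i = Complex.I; the factors commute). Then Σ₂ₙ² = (−1)^n, i.e. Σ₂ₙ² = 1 if n is even and Σ₂ₙ² = −1 if n is odd. -/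
open CliffordAlgebra QuadraticMap

/-!
With `u = ι e * ι f` for a hyperbolic pair, `ι e * ι f * ι e = polar Q e f • ι e` because `ι e`
squares to `Q e = 0`, so `u * u = 2 • u` and `1 - u` is an involution. Vectors from different pairs
anticommute, so the factors `1 - u_j` commute pairwise, hence their product is an involution as
well, and `Σ₂ₙ² = i^(2n) = (-1)^n`.
-/

theorem List.prod_mul_self_eq_one {M : Type*} [Monoid M] {l : List M}
    (hcomm : l.Pairwise Commute) (hinv : ∀ x ∈ l, x * x = 1) : l.prod * l.prod = 1 := by
  induction l with
  | nil => simp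
  | cons a l ih =>
    rw [List.pairwise_cons] at hcomm
    have ha : Commute a l.prod := Commute.list_prod_right _ _ hcomm.1
    calc (a :: l).prod * (a :: l).prod = (a * a) * (l.prod * l.prod) := by
          rw [List.prod_cons, ha.mul_mul_mul_comm]
      _ = 1 := by
          rw [hinv a List.mem_cons_self, ih hcomm.2 fun x hx => hinv x (List.mem_cons_of_mem _ hx),
            one_mul]

theorem commute_mul_right_of_anticommute {R : Type*} [Ring R] {a b c : R}
    (hb : a * b = -(b * a)) (hc : a * c = -(c * a)) : Commute a (b * c) := by
  rw [Commute, SemiconjBy, ← mul_assoc, hb, neg_mul, mul_assoc, hc, mul_neg, neg_neg, mul_assoc]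

namespace CliffordAlgebra

variable {R M : Type*} [CommRing R] [AddCommGroup M] [Module R M] {Q : QuadraticForm R M}

theorem commute_ι_mul_ι_of_isOrtho {a b c d : M} (hac : Q.IsOrtho a c) (had : Q.IsOrtho a d)
    (hbc : Q.IsOrtho b c) (hbd : Q.IsOrtho b d) : Commute (ι Q a * ι Q b) (ι Q c * ι Q d) :=
  Commute.mul_left
    (commute_mul_right_of_anticommute (ι_mul_ι_comm_of_isOrtho hac) (ι_mul_ι_comm_of_isOrtho had))
    (commute_mul_right_of_anticommute (ι_mul_ι_comm_of_isOrtho hbc) (ι_mul_ι_comm_of_isOrtho hbd))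

theorem ι_mul_ι_mul_self_of_map_eq_zero {a : M} (b : M) (ha : Q a = 0) :
    ι Q a * ι Q b * (ι Q a * ι Q b) = polar Q a b • (ι Q a * ι Q b) := by
  rw [← mul_assoc, ι_mul_ι_mul_ι, ha, zero_smul, sub_zero, map_smul, smul_mul_assoc]

theorem one_sub_ι_mul_ι_mul_self {a b : M} (ha : Q a = 0) (hab : polar Q a b = 2) :
    (1 - ι Q a * ι Q b) * (1 - ι Q a * ι Q b) = 1 := by
  have hsq := ι_mul_ι_mul_self_of_map_eq_zero b ha
  rw [hab, two_smul] at hsq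
  rw [mul_one_sub, one_sub_mul, hsq]
  abel

end CliffordAlgebra

theorem sigma_even_sq_general {V : Type*} [AddCommGroup V] [Module ℂ V]
    (Q : QuadraticForm ℂ V) (n : ℕ) (e f : Fin n → V)
    (hQe : ∀ j, Q (e j) = 0)
    (hef : ∀ j, polar Q (e j) (f j) = 2)
    (horth : ∀ i j, i ≠ j →
      polar Q (e i) (e j) = 0 ∧ polar Q (e i) (f j) = 0 ∧ polar Q (f i) (f j) = 0)
    (S : CliffordAlgebra Q)
    (hS : S = (Complex.I ^ n) •
      (List.ofFn (fun j : Fin n => 1 - ι Q (e j) * ι Q (f j))).prod) :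
    S * S = (-1) ^ n := by
  have hprod : (List.ofFn fun j => 1 - ι Q (e j) * ι Q (f j)).prod *
      (List.ofFn fun j => 1 - ι Q (e j) * ι Q (f j)).prod = 1 := by
    refine List.prod_mul_self_eq_one (List.pairwise_ofFn.mpr fun i j hij => ?_) ?_
    · obtain ⟨hee, hef', hff⟩ := horth i j hij.ne
      have hfe := isOrtho_comm.mp (isOrtho_polarBilin.mp (horth j i hij.ne').2.1)
      have h := commute_ι_mul_ι_of_isOrtho (isOrtho_polarBilin.mp hee)
        (isOrtho_polarBilin.mp hef') hfe (isOrtho_polarBilin.mp hff)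
      exact (Commute.one_left _).sub_left ((Commute.one_right _).sub_right h)
    · intro x hx
      obtain ⟨j, rfl⟩ := List.mem_ofFn.mp hx
      exact one_sub_ι_mul_ι_mul_self (hQe j) (hef j)
  rw [hS, smul_mul_smul_comm, hprod, ← pow_add, ← two_mul, pow_mul, Complex.I_sq,
    Algebra.smul_def, mul_one, map_pow, map_neg, map_one]

/-- Let `(e j, f j)`, `j = 1, …, n`, be pairwise orthogonal hyperbolic pairs and
`Σ₂ₙ = i^n • ∏ j (1 - ι (e j) * ι (f j))`.  Then `Σ₂ₙ² = (-1)^n`. -/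
theorem sigma_even_sq {V : Type*} [AddCommGroup V] [Module ℂ V]
    (Q : QuadraticForm ℂ V) (n : ℕ) (e f : Fin n → V)
    (hQe : ∀ j, Q (e j) = 0) (hQf : ∀ j, Q (f j) = 0)
    (hef : ∀ j, polar Q (e j) (f j) = 2)
    (horth : ∀ i j, i ≠ j →
      polar Q (e i) (e j) = 0 ∧ polar Q (e i) (f j) = 0 ∧ polar Q (f i) (f j) = 0)
    (S : CliffordAlgebra Q)
    (hS : S = (Complex.I ^ n) •
      (List.ofFn (fun j : Fin n => 1 - ι Q (e j) * ι Q (f j))).prod) :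
    S * S = (-1) ^ n :=
  sigma_even_sq_general Q n e f hQe hef horth S hS
end

section
/- Let (e_j, f_j), j = 1, …, n, be pairwise orthogonal hyperbolic pairs, and set Σ₂ₙ := i^n * ∏_{j=1}^n (1 − ι e_j * ι f_j). Then star Σ₂ₙ = (−1)^n * Σ₂ₙ, and consequently Σ₂ₙ * star Σ₂ₙ = 1 and star Σ₂ₙ * Σ₂ₙ = 1, i.e. Σ₂ₙ is a unitary element of the Clifford algebra. -/
open CliffordAlgebra QuadraticMap

/-!
Each factor `a = 1 - ι e * ι f` of `Σ₂ₙ` is an involution with `star a = -a`: both follow from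
`ι f * ι e = 2 - ι e * ι f` and `(ι e)² = 0`. Vectors from distinct pairs anticommute in
the Clifford algebra, so the bivectors `ι e * ι f`, and hence the factors, pairwise commute. The
product `P` of the factors therefore satisfies `P * P = 1` and `star P = (-1)^n * P`, and the scalar
`i^n`, which `star` leaves alone, turns `S = i^n • P` into an element with `S * S = (-1)^n`.
-/

namespace List

variable {A : Type*}

theorem star_prod [Monoid A] [StarMul A] (l : List A) :
    star l.prod = (l.map star).reverse.prod :=
  unop_map_list_prod (starMulEquiv (R := A)) l

theorem prod_mul_prod_eq_one_of_pairwise_commute [Monoid A] :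
    ∀ {l : List A}, l.Pairwise Commute → (∀ x ∈ l, x * x = 1) → l.prod * l.prod = 1
  | [], _, _ => by simp
  | a :: t, hcomm, hinv => by
    obtain ⟨ha, ht⟩ := List.pairwise_cons.mp hcomm
    have hat : Commute a t.prod := Commute.list_prod_right _ _ ha
    rw [List.prod_cons, hat.symm.mul_mul_mul_comm, hinv a mem_cons_self,
      prod_mul_prod_eq_one_of_pairwise_commute ht fun x hx => hinv x (mem_cons_of_mem _ hx),
      one_mul]

theorem star_prod_of_pairwise_commute [Monoid A] [HasDistribNeg A] [StarMul A] {l : List A}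
    (hcomm : l.Pairwise Commute) (hstar : ∀ x ∈ l, star x = -x) :
    star l.prod = (-1) ^ l.length * l.prod := by
  have hrev : l.reverse.prod = l.prod :=
    l.reverse_perm.prod_eq' (pairwise_reverse.mpr (hcomm.imp Commute.symm))
  rw [star_prod, map_congr_left hstar, ← map_reverse, prod_map_neg, length_reverse, hrev]

end List

namespace CliffordAlgebra

variable {R M : Type*} [CommRing R] [AddCommGroup M] [Module R M] {Q : QuadraticForm R M}

theorem ι_mul_ι_eq_neg_of_polar_eq_zero {a b : M} (h : polar Q a b = 0) :
    ι Q a * ι Q b = -(ι Q b * ι Q a) :=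
  ι_mul_ι_comm_of_isOrtho (isOrtho_polarBilin.mp h)

theorem commute_ι_ι_mul_ι_of_polar_eq_zero {a c d : M} (hac : polar Q a c = 0)
    (had : polar Q a d = 0) : Commute (ι Q a) (ι Q c * ι Q d) := by
  change ι Q a * (ι Q c * ι Q d) = ι Q c * ι Q d * ι Q a
  rw [← mul_assoc, ι_mul_ι_eq_neg_of_polar_eq_zero hac, neg_mul, mul_assoc,
    ι_mul_ι_eq_neg_of_polar_eq_zero had, mul_neg, neg_neg, mul_assoc]

theorem commute_ι_mul_ι_of_polar_eq_zero {a b c d : M} (hac : polar Q a c = 0)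
    (had : polar Q a d = 0) (hbc : polar Q b c = 0) (hbd : polar Q b d = 0) :
    Commute (ι Q a * ι Q b) (ι Q c * ι Q d) :=
  (commute_ι_ι_mul_ι_of_polar_eq_zero hac had).mul_left
    (commute_ι_ι_mul_ι_of_polar_eq_zero hbc hbd)

theorem ι_mul_ι_swap_of_polar_eq_two {e f : M} (hef : polar Q e f = 2) :
    ι Q f * ι Q e = 2 - ι Q e * ι Q f := by
  rw [ι_mul_ι_comm, polar_comm, hef, map_ofNat]

theorem one_sub_ι_mul_ι_mul_self_s5 {e f : M} (he : Q e = 0) (hef : polar Q e f = 2) :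
    (1 - ι Q e * ι Q f) * (1 - ι Q e * ι Q f) = 1 := by
  have he2 : ι Q e * ι Q e = 0 := by rw [ι_sq_scalar, he, map_zero]
  calc (1 - ι Q e * ι Q f) * (1 - ι Q e * ι Q f)
      = 1 - 2 * (ι Q e * ι Q f) + ι Q e * (ι Q f * ι Q e) * ι Q f := by noncomm_ring
    _ = 1 - ι Q e * ι Q e * (ι Q f * ι Q f) := by
      rw [ι_mul_ι_swap_of_polar_eq_two hef]; noncomm_ring
    _ = 1 := by rw [he2, zero_mul, sub_zero]

theorem star_one_sub_ι_mul_ι {e f : M} (hef : polar Q e f = 2) :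
    star (1 - ι Q e * ι Q f) = -(1 - ι Q e * ι Q f) := by
  rw [star_sub, star_one, star_mul, star_ι, star_ι, neg_mul_neg, ι_mul_ι_swap_of_polar_eq_two hef,
    ← one_add_one_eq_two]
  abel

end CliffordAlgebra

theorem sigma_even_star_general {V : Type*} [AddCommGroup V] [Module ℂ V]
    (Q : QuadraticForm ℂ V) (n : ℕ) (e f : Fin n → V)
    (hQe : ∀ j, Q (e j) = 0)
    (hef : ∀ j, polar Q (e j) (f j) = 2)
    (horth : ∀ i j, i ≠ j →
      polar Q (e i) (e j) = 0 ∧ polar Q (e i) (f j) = 0 ∧ polar Q (f i) (f j) = 0)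
    (S : CliffordAlgebra Q)
    (hS : S = (Complex.I ^ n) •
      (List.ofFn (fun j : Fin n => 1 - ι Q (e j) * ι Q (f j))).prod) :
    star S = (-1) ^ n * S ∧ S * star S = 1 ∧ star S * S = 1 := by
  set L := List.ofFn fun j : Fin n => 1 - ι Q (e j) * ι Q (f j)
  have hcomm : L.Pairwise Commute := List.pairwise_ofFn.mpr fun i j hij => by
    obtain ⟨hee_ij, hef_ij, hff_ij⟩ := horth i j hij.ne
    have hfe_ij : polar Q (f i) (e j) = 0 := by rw [polar_comm]; exact (horth j i hij.ne').2.1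
    exact (Commute.one_left _).sub_left <| (Commute.one_right _).sub_right <|
      commute_ι_mul_ι_of_polar_eq_zero hee_ij hef_ij hfe_ij hff_ij
  have hstarP : star L.prod = (-1) ^ n * L.prod := by
    rw [List.star_prod_of_pairwise_commute hcomm <| List.forall_mem_ofFn_iff.mpr
      fun j => star_one_sub_ι_mul_ι (hef j), List.length_ofFn]
  have hPP : L.prod * L.prod = 1 := List.prod_mul_prod_eq_one_of_pairwise_commute hcomm <|
    List.forall_mem_ofFn_iff.mpr fun j => one_sub_ι_mul_ι_mul_self_s5 (hQe j) (hef j)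
  have hSS : S * S = (-1) ^ n := by
    rw [hS, smul_mul_smul_comm, hPP, ← mul_pow, Complex.I_mul_I, ← Algebra.algebraMap_eq_smul_one,
      map_pow, map_neg, map_one]
  have hstarS : star S = (-1) ^ n * S := by
    rw [hS, CliffordAlgebra.star_smul, hstarP, mul_smul_comm]
  have hsign : ((-1) ^ n * (-1) ^ n : CliffordAlgebra Q) = 1 := by
    rw [← pow_add, ← two_mul, pow_mul, neg_one_sq, one_pow]
  refine ⟨hstarS, ?_, ?_⟩
  · rw [hstarS, ← mul_assoc, ← ((Commute.neg_one_left S).pow_left n).eq, mul_assoc, hSS, hsign]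
  · rw [hstarS, mul_assoc, hSS, hsign]

/-- Let `(e j, f j)`, `j = 1, …, n`, be pairwise orthogonal hyperbolic pairs and
`Σ₂ₙ = i^n • ∏ j (1 - ι (e j) * ι (f j))`.  Then `star Σ₂ₙ = (-1)^n * Σ₂ₙ`, and
`Σ₂ₙ` is unitary: `Σ₂ₙ * star Σ₂ₙ = 1` and `star Σ₂ₙ * Σ₂ₙ = 1`. -/
theorem sigma_even_star {V : Type*} [AddCommGroup V] [Module ℂ V]
    (Q : QuadraticForm ℂ V) (n : ℕ) (e f : Fin n → V)
    (hQe : ∀ j, Q (e j) = 0) (hQf : ∀ j, Q (f j) = 0)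
    (hef : ∀ j, polar Q (e j) (f j) = 2)
    (horth : ∀ i j, i ≠ j →
      polar Q (e i) (e j) = 0 ∧ polar Q (e i) (f j) = 0 ∧ polar Q (f i) (f j) = 0)
    (S : CliffordAlgebra Q)
    (hS : S = (Complex.I ^ n) •
      (List.ofFn (fun j : Fin n => 1 - ι Q (e j) * ι Q (f j))).prod) :
    star S = (-1) ^ n * S ∧ S * star S = 1 ∧ star S * S = 1 :=
  sigma_even_star_general Q n e f hQe hef horth S hS
end

section
/- Let (e_j, f_j), j = 1, …, n, be pairwise orthogonal hyperbolic pairs, and set Σ₂ₙ := i^n * ∏_{j=1}^n (1 − ι e_j * ι f_j). Then for every vector u in the ℂ-span of {e₁, f₁, …, e_n, f_n} one has Σ₂ₙ * ι u * star Σ₂ₙ = −ι u. (Thus Σ₂ₙ covers the element −I of the orthogonal group of the span.) -/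
open CliffordAlgebra QuadraticMap

section Aux
variable {V : Type*} [AddCommGroup V] [Module ℂ V] (Q : QuadraticForm ℂ V)

lemma hyp_mul_star (a b : V) (hb : Q b = 0) (hab : polar Q a b = 2) :
    (1 - ι Q a * ι Q b) * (1 - ι Q b * ι Q a) = -1 := by
  have hyy : ι Q b * ι Q b = 0 := by rw [ι_sq_scalar, hb, map_zero]
  have hxy : ι Q a * ι Q b + ι Q b * ι Q a = 2 := by
    have h := ι_mul_ι_add_swap (Q := Q) a b
    rw [hab, map_ofNat] at h; simpa using h
  set x := ι Q a; set y := ι Q b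
  have expand : (1 - x * y) * (1 - y * x) = 1 - (x * y + y * x) + x * (y * y) * x := by
    noncomm_ring
  rw [expand, hyy, hxy, mul_zero, zero_mul, add_zero]
  norm_num

lemma hyp_star (a b : V) :
    star (1 - ι Q a * ι Q b) = 1 - ι Q b * ι Q a := by
  simp [star_sub, star_mul, star_ι]

lemma hyp_conj_left (a b : V) (ha : Q a = 0) (hab : polar Q a b = 2) :
    (1 - ι Q a * ι Q b) * ι Q a * star (1 - ι Q a * ι Q b) = ι Q a := by
  rw [hyp_star]
  have hxx : ι Q a * ι Q a = 0 := by rw [ι_sq_scalar, ha, map_zero]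
  have hxy : ι Q a * ι Q b + ι Q b * ι Q a = 2 := by
    have h := ι_mul_ι_add_swap (Q := Q) a b
    rw [hab, map_ofNat] at h; simpa using h
  set x := ι Q a; set y := ι Q b
  have hba : y * x = 2 - x * y := eq_sub_of_add_eq' hxy
  have e1 : x * y * x = 2 * x := by
    rw [mul_assoc, hba, mul_sub, ← mul_assoc, hxx, zero_mul, sub_zero]
    noncomm_ring
  have e2 : x * y * x * (y * x) = 2 * (2 * x) := by
    rw [e1, mul_assoc, ← mul_assoc x y x, e1]
  have expand : (1 - x * y) * x * (1 - y * x)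
      = x - x * y * x - x * y * x + x * y * x * (y * x) := by noncomm_ring
  rw [expand, e2, e1]
  noncomm_ring

lemma hyp_conj_right (a b : V) (hb : Q b = 0) :
    (1 - ι Q a * ι Q b) * ι Q b * star (1 - ι Q a * ι Q b) = ι Q b := by
  rw [hyp_star]
  have hyy : ι Q b * ι Q b = 0 := by rw [ι_sq_scalar, hb, map_zero]
  set x := ι Q a; set y := ι Q b
  have expand : (1 - x * y) * y * (1 - y * x)
      = y - (y * y) * x - x * (y * y) + x * ((y * y) * (y * x)) := by noncomm_ring
  rw [expand, hyy, zero_mul, mul_zero, zero_mul, mul_zero, add_zero]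
  noncomm_ring

lemma hyp_conj_orth (a b v : V) (hb : Q b = 0) (hab : polar Q a b = 2)
    (hva : polar Q a v = 0) (hvb : polar Q b v = 0) :
    (1 - ι Q a * ι Q b) * ι Q v * star (1 - ι Q a * ι Q b) = -ι Q v := by
  have key := hyp_mul_star Q a b hb hab
  rw [hyp_star]
  set x := ι Q a; set y := ι Q b; set w := ι Q v
  have hxw : x * w = -(w * x) := by
    have h := ι_mul_ι_add_swap (Q := Q) a v
    rw [hva, map_zero] at h
    exact eq_neg_of_add_eq_zero_left h
  have hyw : y * w = -(w * y) := by
    have h := ι_mul_ι_add_swap (Q := Q) b v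
    rw [hvb, map_zero] at h
    exact eq_neg_of_add_eq_zero_left h
  have h3 : x * y * w = w * (x * y) := by
    rw [mul_assoc, hyw, mul_neg, ← mul_assoc, hxw, neg_mul, neg_neg, mul_assoc]
  have hcomm : (1 - x * y) * w = w * (1 - x * y) := by
    rw [sub_mul, mul_sub, one_mul, mul_one, h3]
  calc (1 - x * y) * w * (1 - y * x) = w * ((1 - x * y) * (1 - y * x)) := by
        rw [hcomm, mul_assoc]
    _ = -w := by rw [key]; noncomm_ring

lemma conj_list {x : CliffordAlgebra Q} :
    ∀ (l : List (CliffordAlgebra Q × ℂ)), (∀ p ∈ l, p.1 * x * star p.1 = p.2 • x) →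
      (l.map Prod.fst).prod * x * star (l.map Prod.fst).prod
        = (l.map Prod.snd).prod • x := by
  intro l
  induction l with
  | nil => intro _; simp
  | cons p t ih =>
    intro h
    have ht := ih (fun q hq => h q (List.mem_cons_of_mem _ hq))
    have hp := h p List.mem_cons_self
    simp only [List.map_cons, List.prod_cons, star_mul]
    calc p.1 * (t.map Prod.fst).prod * x * (star (t.map Prod.fst).prod * star p.1)
        = p.1 * ((t.map Prod.fst).prod * x * star (t.map Prod.fst).prod) * star p.1 := by
          noncomm_ring
      _ = p.1 * ((t.map Prod.snd).prod • x) * star p.1 := by rw [ht]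
      _ = (t.map Prod.snd).prod • (p.1 * x * star p.1) := by
          rw [mul_smul_comm, smul_mul_assoc]
      _ = (p.2 * (t.map Prod.snd).prod) • x := by rw [hp, smul_smul, mul_comm]

end Aux


section Main
variable {V : Type*} [AddCommGroup V] [Module ℂ V] (Q : QuadraticForm ℂ V)

lemma sigma_conj_gen (n : ℕ) (e f : Fin n → V) (S : CliffordAlgebra Q)
    (hS : S = (Complex.I ^ n) •
      (List.ofFn (fun j : Fin n => 1 - ι Q (e j) * ι Q (f j))).prod)
    (v : V) (j : Fin n)
    (hv : ∀ k, (1 - ι Q (e k) * ι Q (f k)) * ι Q v * star (1 - ι Q (e k) * ι Q (f k))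
      = (if k = j then (1:ℂ) else -1) • ι Q v) :
    S * ι Q v * star S = -ι Q v := by
  set A : Fin n → CliffordAlgebra Q := fun k => 1 - ι Q (e k) * ι Q (f k) with hA
  set l : List (CliffordAlgebra Q × ℂ) :=
    List.ofFn (fun k => (A k, if k = j then (1:ℂ) else -1)) with hl
  have hmapf : l.map Prod.fst = List.ofFn A := by
    rw [hl, List.map_ofFn]; rfl
  have hconj := conj_list Q l (by
    intro p hp
    rw [hl, List.mem_ofFn] at hp
    obtain ⟨k, rfl⟩ := hp
    exact hv k)
  have hsnd : (l.map Prod.snd).prod = (-1:ℂ)^(n-1) := by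
    rw [hl, List.map_ofFn]
    show (List.ofFn fun k : Fin n => if k = j then (1:ℂ) else -1).prod = _
    rw [List.prod_ofFn, ← Finset.mul_prod_erase Finset.univ _ (Finset.mem_univ j),
      if_pos rfl, one_mul,
      Finset.prod_congr rfl (fun k hk => if_neg (Finset.ne_of_mem_erase hk)),
      Finset.prod_const, Finset.card_erase_of_mem (Finset.mem_univ j),
      Finset.card_univ, Fintype.card_fin]
  have hfin : (List.ofFn A).prod * ι Q v * star (List.ofFn A).prod
      = (-1:ℂ)^(n-1) • ι Q v := by
    rw [← hmapf, hconj, hsnd]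
  obtain ⟨m, rfl⟩ : ∃ m, n = m + 1 :=
    ⟨n - 1, (Nat.succ_pred_eq_of_pos (Fin.pos j)).symm⟩
  have hscalar : Complex.I ^ (m+1) * Complex.I ^ (m+1) * (-1:ℂ)^(m+1-1) = -1 := by
    have h1 : Complex.I ^ (m+1) * Complex.I ^ (m+1) = (-1:ℂ)^(m+1) := by
      rw [← pow_add, show (m+1)+(m+1) = 2*(m+1) by ring, pow_mul, Complex.I_sq]
    rw [Nat.add_sub_cancel, h1, ← pow_add, show (m+1)+m = 2*m+1 by ring,
      pow_succ, pow_mul, neg_one_sq, one_pow, one_mul]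
  rw [hS, CliffordAlgebra.star_smul, smul_mul_assoc, smul_mul_assoc, mul_smul_comm,
    smul_smul, hfin, smul_smul, hscalar, neg_one_smul]

end Main

/-- Let `(e j, f j)`, `j = 1, …, n`, be pairwise orthogonal hyperbolic pairs and
`Σ₂ₙ = i^n • ∏ j (1 - ι (e j) * ι (f j))`.  For every `u` in the `ℂ`-span of the
`e j` and `f j`, one has `Σ₂ₙ * ι u * star Σ₂ₙ = -ι u`. -/
theorem sigma_even_acts_as_neg_one {V : Type*} [AddCommGroup V] [Module ℂ V]
    (Q : QuadraticForm ℂ V) (n : ℕ) (e f : Fin n → V)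
    (hQe : ∀ j, Q (e j) = 0) (hQf : ∀ j, Q (f j) = 0)
    (hef : ∀ j, polar Q (e j) (f j) = 2)
    (horth : ∀ i j, i ≠ j →
      polar Q (e i) (e j) = 0 ∧ polar Q (e i) (f j) = 0 ∧ polar Q (f i) (f j) = 0)
    (S : CliffordAlgebra Q)
    (hS : S = (Complex.I ^ n) •
      (List.ofFn (fun j : Fin n => 1 - ι Q (e j) * ι Q (f j))).prod) :
    ∀ u ∈ Submodule.span ℂ (Set.range e ∪ Set.range f),
      S * ι Q u * star S = -(ι Q u) := by
  intro u hu
  induction hu using Submodule.span_induction with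
  | mem v hv =>
    rcases hv with ⟨j, rfl⟩ | ⟨j, rfl⟩
    · refine sigma_conj_gen Q n e f S hS _ j fun k => ?_
      by_cases hk : k = j
      · subst hk
        rw [if_pos rfl, one_smul]
        exact hyp_conj_left Q (e k) (f k) (hQe k) (hef k)
      · rw [if_neg hk, neg_one_smul]
        exact hyp_conj_orth Q (e k) (f k) (e j) (hQf k) (hef k) (horth k j hk).1
          (by rw [polar_comm]; exact (horth j k (Ne.symm hk)).2.1)
    · refine sigma_conj_gen Q n e f S hS _ j fun k => ?_
      by_cases hk : k = j
      · subst hk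
        rw [if_pos rfl, one_smul]
        exact hyp_conj_right Q (e k) (f k) (hQf k)
      · rw [if_neg hk, neg_one_smul]
        exact hyp_conj_orth Q (e k) (f k) (f j) (hQf k) (hef k) (horth k j hk).2.1
          (horth k j hk).2.2
  | zero => simp
  | add x y _ _ hx hy => rw [map_add, mul_add, add_mul, hx, hy, neg_add]
  | smul c x _ hx => rw [LinearMap.map_smul, mul_smul_comm, smul_mul_assoc, hx, smul_neg]
end

section
/- Let (e_j, f_j), j = 1, …, n, be pairwise orthogonal hyperbolic pairs, and set Σ₂ₙ := i^n * ∏_{j=1}^n (1 − ι e_j * ι f_j). Then Σ₂ₙ is an element of the Pin group pinGroup Q of the Clifford algebra (it is unitary and lies in the Lipschitz group, being equal to (−1)^n times the product of the 2n unit vectors ι v_j * ι w_j with v_j = (e_j + f_j)/√2 and w_j = −i(e_j − f_j)/√2). -/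
/-!
For a hyperbolic pair `(a, b)` the factor `i • (1 - ι a * ι b)` is the product `ι v * ι w` of
the vectors `v = a - b / 2` and `w = -i • (a + b / 2)`, both with `Q = -1`. The image of such a
vector is a unit with inverse `-ι v = star (ι v)`, hence lies in the Pin group, and the scalar
`i ^ n` distributes over the `n` factors.
-/

open CliffordAlgebra QuadraticMap

theorem ι_mem_pinGroup_of_eq_neg_one {R M : Type*} [CommRing R] [AddCommGroup M] [Module R M]
    {Q : QuadraticForm R M} {m : M} (hm : Q m = -1) : ι Q m ∈ pinGroup Q := by
  have hsq : ι Q m * ι Q m = -1 := by rw [ι_sq_scalar, hm, map_neg, map_one]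
  refine ⟨⟨⟨ι Q m, -ι Q m, by rw [mul_neg, hsq, neg_neg], by rw [neg_mul, hsq, neg_neg]⟩,
    Subgroup.subset_closure ⟨m, rfl⟩, rfl⟩, ?_, ?_⟩
  · rw [star_ι, neg_mul, hsq, neg_neg]
  · rw [star_ι, mul_neg, hsq, neg_neg]

theorem apply_add_smul_of_isotropic {R M : Type*} [CommRing R] [AddCommGroup M] [Module R M]
    {Q : QuadraticForm R M} {a b : M} (hQa : Q a = 0) (hQb : Q b = 0) (c : R) :
    Q (a + c • b) = c * polar Q a b := by
  rw [QuadraticMap.map_add Q, hQa, QuadraticMap.map_smul, hQb, polar_smul_right, smul_eq_mul]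
  ring

section Hyperbolic

variable {V : Type*} [AddCommGroup V] [Module ℂ V] {Q : QuadraticForm ℂ V} {a b : V}

theorem ι_mul_ι_eq_I_smul_one_sub_ι_mul_ι (hQa : Q a = 0) (hQb : Q b = 0)
    (hab : polar Q a b = 2) :
    ι Q (a + (-2⁻¹ : ℂ) • b) * ι Q ((-Complex.I) • (a + (2⁻¹ : ℂ) • b))
      = Complex.I • (1 - ι Q a * ι Q b) := by
  have hsq : ι Q a * ι Q a = 0 ∧ ι Q b * ι Q b = 0 := by
    simp [ι_sq_scalar, hQa, hQb]
  simp only [map_add, map_smul, mul_add, add_mul, mul_smul_comm, smul_mul_assoc, hsq.1, hsq.2,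
    ι_mul_ι_comm b a, polar_comm Q b a, hab, Algebra.algebraMap_eq_smul_one]
  module

theorem I_smul_one_sub_ι_mul_ι_mem_pinGroup (hQa : Q a = 0) (hQb : Q b = 0)
    (hab : polar Q a b = 2) : Complex.I • (1 - ι Q a * ι Q b) ∈ pinGroup Q := by
  rw [← ι_mul_ι_eq_I_smul_one_sub_ι_mul_ι hQa hQb hab]
  refine mul_mem (ι_mem_pinGroup_of_eq_neg_one ?_) (ι_mem_pinGroup_of_eq_neg_one ?_)
  · rw [apply_add_smul_of_isotropic hQa hQb, hab]; norm_num
  · rw [QuadraticMap.map_smul, apply_add_smul_of_isotropic hQa hQb, hab, smul_eq_mul]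
    ring_nf; rw [Complex.I_sq]

end Hyperbolic

theorem sigma_even_mem_pinGroup_general {V : Type*} [AddCommGroup V] [Module ℂ V]
    (Q : QuadraticForm ℂ V) (n : ℕ) (e f : Fin n → V)
    (hQe : ∀ j, Q (e j) = 0) (hQf : ∀ j, Q (f j) = 0)
    (hef : ∀ j, polar Q (e j) (f j) = 2)
    (S : CliffordAlgebra Q)
    (hS : S = (Complex.I ^ n) •
      (List.ofFn (fun j : Fin n => 1 - ι Q (e j) * ι Q (f j))).prod) :
    S ∈ pinGroup Q := by
  have hdistrib := List.smul_prod (List.ofFn fun j => 1 - ι Q (e j) * ι Q (f j)) Complex.I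
  rw [List.length_ofFn, List.map_ofFn] at hdistrib
  rw [hS, hdistrib]
  refine Submonoid.list_prod_mem _ fun x hx => ?_
  obtain ⟨j, rfl⟩ := List.mem_ofFn.mp hx
  exact I_smul_one_sub_ι_mul_ι_mem_pinGroup (hQe j) (hQf j) (hef j)

/-- Let `(e j, f j)`, `j = 1, …, n`, be pairwise orthogonal hyperbolic pairs and
`Σ₂ₙ = i^n • ∏ j (1 - ι (e j) * ι (f j))`.  Then `Σ₂ₙ` belongs to the Pin group. -/
theorem sigma_even_mem_pinGroup {V : Type*} [AddCommGroup V] [Module ℂ V]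
    (Q : QuadraticForm ℂ V) (n : ℕ) (e f : Fin n → V)
    (hQe : ∀ j, Q (e j) = 0) (hQf : ∀ j, Q (f j) = 0)
    (hef : ∀ j, polar Q (e j) (f j) = 2)
    (horth : ∀ i j, i ≠ j →
      polar Q (e i) (e j) = 0 ∧ polar Q (e i) (f j) = 0 ∧ polar Q (f i) (f j) = 0)
    (S : CliffordAlgebra Q)
    (hS : S = (Complex.I ^ n) •
      (List.ofFn (fun j : Fin n => 1 - ι Q (e j) * ι Q (f j))).prod) :
    S ∈ pinGroup Q :=
  sigma_even_mem_pinGroup_general Q n e f hQe hQf hef S hS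
end

section
/- Let (e_j, f_j), j = 1, …, k, be pairwise orthogonal hyperbolic pairs and let v be a vector with Q v = 1 orthogonal to all e_j and f_j. Set Σ₂ₖ₊₁ := i^k * ι v * ∏_{j=1}^k (1 − ι e_j * ι f_j). Then Σ₂ₖ₊₁² = (−1)^k, and star Σ₂ₖ₊₁ = (−1)^{k+1} * Σ₂ₖ₊₁ (so Σ₂ₖ₊₁ * star Σ₂ₖ₊₁ = −1). -/
open CliffordAlgebra QuadraticMap

section helpers

variable {A : Type*} [Ring A]

private lemma my_anticomm_pair {v x y : A} (h1 : v * x = -(x * v)) (h2 : v * y = -(y * v)) :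
    Commute v (x * y) := by
  show v * (x * y) = (x * y) * v
  calc v * (x * y) = (v * x) * y := by rw [mul_assoc]
    _ = -(x * (v * y)) := by rw [h1]; noncomm_ring
    _ = -(x * (-(y * v))) := by rw [h2]
    _ = (x * y) * v := by noncomm_ring

private lemma my_prod_sq_one (L : List A) (hc : L.Pairwise Commute)
    (h1 : ∀ x ∈ L, x * x = 1) : L.prod * L.prod = 1 := by
  induction L with
  | nil => simp
  | cons a l ih =>
    rw [List.pairwise_cons] at hc
    obtain ⟨hal, hl⟩ := hc
    have hcp : Commute a l.prod := Commute.list_prod_right _ _ (fun x hx => hal x hx)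
    have ha : a * a = 1 := h1 a List.mem_cons_self
    have hrest : l.prod * l.prod = 1 := ih hl (fun x hx => h1 x (List.mem_cons_of_mem _ hx))
    rw [List.prod_cons]
    calc a * l.prod * (a * l.prod) = a * (l.prod * a) * l.prod := by noncomm_ring
      _ = a * (a * l.prod) * l.prod := by rw [← hcp.eq]
      _ = (a * a) * (l.prod * l.prod) := by noncomm_ring
      _ = 1 := by rw [ha, hrest, one_mul]

private lemma my_star_prod [StarRing A] (L : List A) (hc : L.Pairwise Commute)
    (hs : ∀ x ∈ L, star x = -x) : star L.prod = (-1) ^ L.length * L.prod := by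
  induction L with
  | nil => simp
  | cons a l ih =>
    rw [List.pairwise_cons] at hc
    obtain ⟨hal, hl⟩ := hc
    have hcp : Commute a l.prod := Commute.list_prod_right _ _ (fun x hx => hal x hx)
    have ha : star a = -a := hs a List.mem_cons_self
    have hrest : star l.prod = (-1) ^ l.length * l.prod :=
      ih hl (fun x hx => hs x (List.mem_cons_of_mem _ hx))
    rw [List.prod_cons, star_mul, hrest, ha, List.length_cons, pow_succ]
    calc (-1 : A) ^ l.length * l.prod * -a = (-1) ^ l.length * -(l.prod * a) := by noncomm_ring
      _ = (-1) ^ l.length * -(a * l.prod) := by rw [← hcp.eq]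
      _ = (-1) ^ l.length * -1 * (a * l.prod) := by noncomm_ring

end helpers

/-- Let `(e j, f j)`, `j = 1, …, k`, be pairwise orthogonal hyperbolic pairs and `v`
a unit vector orthogonal to all of them.  Set
`Σ₂ₖ₊₁ = i^k • (ι v * ∏ j (1 - ι (e j) * ι (f j)))`.  Then `Σ₂ₖ₊₁² = (-1)^k`,
`star Σ₂ₖ₊₁ = (-1)^(k+1) * Σ₂ₖ₊₁`, and `Σ₂ₖ₊₁ * star Σ₂ₖ₊₁ = -1`. -/
theorem sigma_odd_sq_and_star {V : Type*} [AddCommGroup V] [Module ℂ V]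
    (Q : QuadraticForm ℂ V) (k : ℕ) (e f : Fin k → V) (v : V)
    (hQe : ∀ j, Q (e j) = 0) (hQf : ∀ j, Q (f j) = 0)
    (hef : ∀ j, polar Q (e j) (f j) = 2)
    (horth : ∀ i j, i ≠ j →
      polar Q (e i) (e j) = 0 ∧ polar Q (e i) (f j) = 0 ∧ polar Q (f i) (f j) = 0)
    (hv : Q v = 1)
    (hve : ∀ j, polar Q v (e j) = 0) (hvf : ∀ j, polar Q v (f j) = 0)
    (S : CliffordAlgebra Q)
    (hS : S = (Complex.I ^ k) •
      (ι Q v * (List.ofFn (fun j : Fin k => 1 - ι Q (e j) * ι Q (f j))).prod)) :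
    S * S = (-1) ^ k ∧ star S = (-1) ^ (k + 1) * S ∧ S * star S = -1 := by
  -- anticommutation from vanishing polar form
  have hanti : ∀ x y : V, polar Q x y = 0 → ι Q x * ι Q y = -(ι Q y * ι Q x) := by
    intro x y h
    have h2 := CliffordAlgebra.ι_mul_ι_add_swap (Q := Q) x y
    rw [h, map_zero] at h2
    exact eq_neg_of_add_eq_zero_left h2
  set a : Fin k → CliffordAlgebra Q := fun j => 1 - ι Q (e j) * ι Q (f j) with ha_def
  set L : List (CliffordAlgebra Q) := List.ofFn a with hL_def
  set P : CliffordAlgebra Q := L.prod with hP_def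
  -- fe = 2 - ef
  have hfe : ∀ j, ι Q (f j) * ι Q (e j) = 2 - ι Q (e j) * ι Q (f j) := by
    intro j
    have h2 := CliffordAlgebra.ι_mul_ι_add_swap (Q := Q) (e j) (f j)
    rw [hef j] at h2
    have h3 : (algebraMap ℂ (CliffordAlgebra Q)) 2 = 2 := map_ofNat _ 2
    rw [h3] at h2
    exact eq_sub_of_add_eq' h2
  have he2 : ∀ j, ι Q (e j) * ι Q (e j) = 0 := by
    intro j; rw [ι_sq_scalar, hQe j, map_zero]
  have hf2 : ∀ j, ι Q (f j) * ι Q (f j) = 0 := by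
    intro j; rw [ι_sq_scalar, hQf j, map_zero]
  -- each a j squares to 1
  have hasq : ∀ j, a j * a j = 1 := by
    intro j
    have hefsq : ι Q (e j) * ι Q (f j) * (ι Q (e j) * ι Q (f j)) =
        2 * (ι Q (e j) * ι Q (f j)) := by
      calc ι Q (e j) * ι Q (f j) * (ι Q (e j) * ι Q (f j))
          = ι Q (e j) * (ι Q (f j) * ι Q (e j)) * ι Q (f j) := by noncomm_ring
        _ = ι Q (e j) * (2 - ι Q (e j) * ι Q (f j)) * ι Q (f j) := by rw [hfe j]
        _ = 2 * (ι Q (e j) * ι Q (f j)) -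
            ι Q (e j) * ι Q (e j) * (ι Q (f j) * ι Q (f j)) := by noncomm_ring
        _ = 2 * (ι Q (e j) * ι Q (f j)) := by rw [he2 j]; noncomm_ring
    show (1 - ι Q (e j) * ι Q (f j)) * (1 - ι Q (e j) * ι Q (f j)) = 1
    calc (1 - ι Q (e j) * ι Q (f j)) * (1 - ι Q (e j) * ι Q (f j))
        = 1 - 2 * (ι Q (e j) * ι Q (f j)) +
          ι Q (e j) * ι Q (f j) * (ι Q (e j) * ι Q (f j)) := by noncomm_ring
      _ = 1 := by rw [hefsq]; rw [sub_add_cancel]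
  -- star of each a j
  have hastar : ∀ j, star (a j) = -(a j) := by
    intro j
    show star (1 - ι Q (e j) * ι Q (f j)) = -(1 - ι Q (e j) * ι Q (f j))
    rw [star_sub, star_one, star_mul, star_ι, star_ι, neg_mul_neg, hfe j,
      ← one_add_one_eq_two]
    abel
  -- ι v commutes with each a j
  have hvcomm : ∀ j, Commute (ι Q v) (a j) := by
    intro j
    have h1 := hanti v (e j) (hve j)
    have h2 := hanti v (f j) (hvf j)
    exact (Commute.one_right _).sub_right (my_anticomm_pair h1 h2)
  -- distinct a's commute
  have haacomm : ∀ i j, i ≠ j → Commute (a i) (a j) := by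
    intro i j hij
    obtain ⟨hee, hef', hff⟩ := horth i j hij
    have hfe' : polar Q (f i) (e j) = 0 := by
      rw [polar_comm]
      exact (horth j i (Ne.symm hij)).2.1
    have c1 : Commute (ι Q (e i)) (ι Q (e j) * ι Q (f j)) :=
      my_anticomm_pair (hanti _ _ hee) (hanti _ _ hef')
    have c2 : Commute (ι Q (f i)) (ι Q (e j) * ι Q (f j)) :=
      my_anticomm_pair (hanti _ _ hfe') (hanti _ _ hff)
    have hmid : Commute (ι Q (e i) * ι Q (f i)) (ι Q (e j) * ι Q (f j)) :=
      c1.mul_left c2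
    have h1 : Commute (ι Q (e i) * ι Q (f i)) (a j) :=
      Commute.sub_right (Commute.one_right _) hmid
    exact Commute.sub_left (Commute.one_left _) h1
  have hLpw : L.Pairwise Commute := by
    rw [hL_def]
    rw [List.pairwise_ofFn]
    intro i j hij
    exact haacomm i j (ne_of_lt hij)
  have hmemL : ∀ x ∈ L, ∃ j, x = a j := by
    intro x hx
    rw [hL_def, List.mem_ofFn] at hx
    obtain ⟨j, hj⟩ := hx
    exact ⟨j, hj.symm⟩
  -- key facts about P
  have hP2 : P * P = 1 := by
    apply my_prod_sq_one L hLpw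
    intro x hx
    obtain ⟨j, rfl⟩ := hmemL x hx
    exact hasq j
  have hPstar : star P = (-1) ^ k * P := by
    have := my_star_prod L hLpw (fun x hx => by
      obtain ⟨j, rfl⟩ := hmemL x hx
      exact hastar j)
    rwa [hL_def, List.length_ofFn] at this
  have hvP : Commute (ι Q v) P :=
    Commute.list_prod_right _ _ (fun x hx => by
      obtain ⟨j, rfl⟩ := hmemL x hx
      exact hvcomm j)
  have hv2 : ι Q v * ι Q v = 1 := by rw [ι_sq_scalar, hv, map_one]
  have hvPvP : (ι Q v * P) * (ι Q v * P) = 1 := by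
    calc (ι Q v * P) * (ι Q v * P) = ι Q v * (P * ι Q v) * P := by noncomm_ring
      _ = ι Q v * (ι Q v * P) * P := by rw [← hvP.eq]
      _ = (ι Q v * ι Q v) * (P * P) := by noncomm_ring
      _ = 1 := by rw [hv2, hP2, one_mul]
  -- combine
  have hII : Complex.I ^ k * Complex.I ^ k = (-1 : ℂ) ^ k := by
    rw [← mul_pow, Complex.I_mul_I]
  have hSS : S * S = (-1) ^ k := by
    rw [hS, smul_mul_smul_comm, hvPvP, hII, Algebra.smul_def, mul_one,
      map_pow, _root_.map_neg, _root_.map_one]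
  have hstarS : star S = (-1) ^ (k + 1) * S := by
    rw [hS, CliffordAlgebra.star_smul, star_mul, star_ι, hPstar]
    have : (-1 : CliffordAlgebra Q) ^ k * P * -ι Q v = (-1) ^ (k + 1) * (ι Q v * P) := by
      calc (-1 : CliffordAlgebra Q) ^ k * P * -ι Q v = (-1) ^ k * -(P * ι Q v) := by noncomm_ring
        _ = (-1) ^ k * -(ι Q v * P) := by rw [← hvP.eq]
        _ = (-1) ^ (k + 1) * (ι Q v * P) := by rw [pow_succ]; noncomm_ring
    rw [this, ← mul_smul_comm]
  refine ⟨hSS, hstarS, ?_⟩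
  rw [hstarS]
  have hcomm : Commute ((-1 : CliffordAlgebra Q) ^ (k + 1)) S := (Commute.neg_one_left S).pow_left _
  rw [← mul_assoc, ← hcomm.eq, mul_assoc, hSS, ← pow_add]
  have hodd : Odd (k + 1 + k) := ⟨k, by ring⟩
  exact hodd.neg_one_pow
end

section
/- Let Σ := i^k * ι v * ∏_{j=1}^k (1 − ι e_j * ι f_j) and Σ' := i^ℓ * ι v' * ∏_{j=1}^ℓ (1 − ι e'_j * ι f'_j) be two odd-block elements built from unit vectors v, v' (Q v = Q v' = 1) and hyperbolic pairs (e_j, f_j), (e'_j, f'_j), where all the vectors v, e_j, f_j, v', e'_j, f'_j are pairwise orthogonal (except the pairings polar Q e_j f_j = 2 and polar Q e'_j f'_j = 2 within each hyperbolic pair). Then Σ * Σ' = −Σ' * Σ. -/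
/-!
Each vector of one block is orthogonal to every vector of the other, so it anticommutes with
them in the Clifford algebra. Hence `ι v` commutes with each factor `1 - ι e' * ι f'` of the
other block (two sign changes), the factors of the two blocks commute, and the only sign left
in `Σ * Σ'` comes from swapping `ι v` and `ι v'`.
-/

open CliffordAlgebra QuadraticMap

theorem SemiconjBy.mul_mul_of_commute {A : Type*} [Monoid A] {a p a' p' b : A}
    (ha : SemiconjBy a a' b) (hap' : Commute a p') (hpa' : Commute p a')
    (hpp' : Commute p p') : SemiconjBy (a * p) (a' * p') (b * p') :=
  (ha.mul_right hap').mul_left (hpa'.mul_right hpp')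

section CliffordAlgebra

universe u v

variable {R : Type u} {M : Type v} [CommRing R] [AddCommGroup M] [Module R M]
  {Q : QuadraticForm R M}

theorem semiconjBy_ι_neg_ι {x y : M} (h : polar Q x y = 0) :
    SemiconjBy (ι Q x) (ι Q y) (-ι Q y) := by
  rw [SemiconjBy, ι_mul_ι_comm, h, map_zero, zero_sub, neg_mul]

theorem commute_ι_one_sub_ι_mul_ι {x a b : M} (ha : polar Q x a = 0) (hb : polar Q x b = 0) :
    Commute (ι Q x) (1 - ι Q a * ι Q b) := by
  have h := (semiconjBy_ι_neg_ι ha).mul_right (semiconjBy_ι_neg_ι hb)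
  rw [neg_mul_neg] at h
  exact (Commute.one_right _).sub_right h

theorem commute_one_sub_ι_mul_ι {a b a' b' : M}
    (haa' : polar Q a a' = 0) (hab' : polar Q a b' = 0)
    (hba' : polar Q b a' = 0) (hbb' : polar Q b b' = 0) :
    Commute (1 - ι Q a * ι Q b) (1 - ι Q a' * ι Q b') := by
  rw [polar_comm] at haa' hab' hba' hbb'
  have h := (commute_ι_one_sub_ι_mul_ι haa' hba').mul_left (commute_ι_one_sub_ι_mul_ι hab' hbb')
  exact ((Commute.one_left _).sub_left h).symm

variable (Q) in
def hyperbolicProduct {n : ℕ} (e f : Fin n → M) : CliffordAlgebra Q :=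
  (List.ofFn fun j => 1 - ι Q (e j) * ι Q (f j)).prod

theorem commute_ι_hyperbolicProduct {n : ℕ} {x : M} {e f : Fin n → M}
    (h : ∀ j, polar Q x (e j) = 0 ∧ polar Q x (f j) = 0) :
    Commute (ι Q x) (hyperbolicProduct Q e f) := by
  refine Commute.list_prod_right _ _ fun y hy => ?_
  obtain ⟨j, rfl⟩ := List.mem_ofFn.mp hy
  exact commute_ι_one_sub_ι_mul_ι (h j).1 (h j).2

theorem commute_hyperbolicProduct {n m : ℕ} {e f : Fin n → M} {e' f' : Fin m → M}
    (h : ∀ i j, polar Q (e i) (e' j) = 0 ∧ polar Q (e i) (f' j) = 0 ∧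
      polar Q (f i) (e' j) = 0 ∧ polar Q (f i) (f' j) = 0) :
    Commute (hyperbolicProduct Q e f) (hyperbolicProduct Q e' f') := by
  refine Commute.list_prod_right _ _ fun y hy => Commute.list_prod_left _ _ fun x hx => ?_
  obtain ⟨j, rfl⟩ := List.mem_ofFn.mp hy
  obtain ⟨i, rfl⟩ := List.mem_ofFn.mp hx
  obtain ⟨h₁, h₂, h₃, h₄⟩ := h i j
  exact commute_one_sub_ι_mul_ι h₁ h₂ h₃ h₄

theorem ι_mul_hyperbolicProduct_anticomm {n m : ℕ} {v v' : M} {e f : Fin n → M}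
    {e' f' : Fin m → M} (hvv' : polar Q v v' = 0)
    (hvP' : ∀ j, polar Q v (e' j) = 0 ∧ polar Q v (f' j) = 0)
    (hPv' : ∀ i, polar Q (e i) v' = 0 ∧ polar Q (f i) v' = 0)
    (hPP' : ∀ i j, polar Q (e i) (e' j) = 0 ∧ polar Q (e i) (f' j) = 0 ∧
      polar Q (f i) (e' j) = 0 ∧ polar Q (f i) (f' j) = 0) :
    ι Q v * hyperbolicProduct Q e f * (ι Q v' * hyperbolicProduct Q e' f') =
      -(ι Q v' * hyperbolicProduct Q e' f' * (ι Q v * hyperbolicProduct Q e f)) := by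
  have hv'P : ∀ i, polar Q v' (e i) = 0 ∧ polar Q v' (f i) = 0 := fun i => by
    simpa only [polar_comm Q v'] using hPv' i
  have h := (semiconjBy_ι_neg_ι hvv').mul_mul_of_commute (commute_ι_hyperbolicProduct hvP')
    (commute_ι_hyperbolicProduct hv'P).symm (commute_hyperbolicProduct hPP')
  simpa only [neg_mul] using h.eq

theorem sigma_odd_anticommute_general {V : Type*} [AddCommGroup V] [Module ℂ V]
    (Q : QuadraticForm ℂ V) (k l : ℕ)
    (e f : Fin k → V) (v : V) (e' f' : Fin l → V) (v' : V)
    -- the two blocks are mutually orthogonal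
    (hvv' : polar Q v v' = 0)
    (hcross₁ : ∀ j, polar Q v (e' j) = 0 ∧ polar Q v (f' j) = 0)
    (hcross₂ : ∀ i, polar Q (e i) v' = 0 ∧ polar Q (f i) v' = 0)
    (hcross₃ : ∀ i j, polar Q (e i) (e' j) = 0 ∧ polar Q (e i) (f' j) = 0 ∧
      polar Q (f i) (e' j) = 0 ∧ polar Q (f i) (f' j) = 0)
    (S S' : CliffordAlgebra Q)
    (hS : S = (Complex.I ^ k) •
      (ι Q v * (List.ofFn (fun j : Fin k => 1 - ι Q (e j) * ι Q (f j))).prod))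
    (hS' : S' = (Complex.I ^ l) •
      (ι Q v' * (List.ofFn (fun j : Fin l => 1 - ι Q (e' j) * ι Q (f' j))).prod)) :
    S * S' = -(S' * S) := by
  subst hS hS'
  rw [smul_mul_smul_comm, smul_mul_smul_comm, mul_comm (Complex.I ^ l), ← smul_neg]
  exact congrArg _ (ι_mul_hyperbolicProduct_anticomm hvv' hcross₁ hcross₂ hcross₃)

/-- Two odd-block elements `Σ = i^k • (ι v * ∏ j (1 - ι (e j) * ι (f j)))` and
`Σ' = i^ℓ • (ι v' * ∏ j (1 - ι (e' j) * ι (f' j)))` built from mutually orthogonal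
data anticommute: `Σ * Σ' = -(Σ' * Σ)`. -/
theorem sigma_odd_anticommute {V : Type*} [AddCommGroup V] [Module ℂ V]
    (Q : QuadraticForm ℂ V) (k l : ℕ)
    (e f : Fin k → V) (v : V) (e' f' : Fin l → V) (v' : V)
    -- first block
    (hQe : ∀ j, Q (e j) = 0) (hQf : ∀ j, Q (f j) = 0)
    (hef : ∀ j, polar Q (e j) (f j) = 2)
    (horth : ∀ i j, i ≠ j →
      polar Q (e i) (e j) = 0 ∧ polar Q (e i) (f j) = 0 ∧ polar Q (f i) (f j) = 0)
    (hv : Q v = 1)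
    (hve : ∀ j, polar Q v (e j) = 0) (hvf : ∀ j, polar Q v (f j) = 0)
    -- second block
    (hQe' : ∀ j, Q (e' j) = 0) (hQf' : ∀ j, Q (f' j) = 0)
    (hef' : ∀ j, polar Q (e' j) (f' j) = 2)
    (horth' : ∀ i j, i ≠ j →
      polar Q (e' i) (e' j) = 0 ∧ polar Q (e' i) (f' j) = 0 ∧
        polar Q (f' i) (f' j) = 0)
    (hv' : Q v' = 1)
    (hve' : ∀ j, polar Q v' (e' j) = 0) (hvf' : ∀ j, polar Q v' (f' j) = 0)
    -- the two blocks are mutually orthogonal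
    (hvv' : polar Q v v' = 0)
    (hcross₁ : ∀ j, polar Q v (e' j) = 0 ∧ polar Q v (f' j) = 0)
    (hcross₂ : ∀ i, polar Q (e i) v' = 0 ∧ polar Q (f i) v' = 0)
    (hcross₃ : ∀ i j, polar Q (e i) (e' j) = 0 ∧ polar Q (e i) (f' j) = 0 ∧
      polar Q (f i) (e' j) = 0 ∧ polar Q (f i) (f' j) = 0)
    (S S' : CliffordAlgebra Q)
    (hS : S = (Complex.I ^ k) •
      (ι Q v * (List.ofFn (fun j : Fin k => 1 - ι Q (e j) * ι Q (f j))).prod))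
    (hS' : S' = (Complex.I ^ l) •
      (ι Q v' * (List.ofFn (fun j : Fin l => 1 - ι Q (e' j) * ι Q (f' j))).prod)) :
    S * S' = -(S' * S) :=
  sigma_odd_anticommute_general Q k l e f v e' f' v' hvv' hcross₁ hcross₂ hcross₃ S S' hS hS'
end CliffordAlgebra
end

section
/- Let Σ := i^k * ι v * ∏_{j=1}^k (1 − ι e_j * ι f_j) and Σ' := i^ℓ * ι v' * ∏_{j=1}^ℓ (1 − ι e'_j * ι f'_j) be two odd-block elements built from mutually orthogonal data as above. Then (Σ * Σ')² = (−1)^{k+ℓ+1}. In particular, for the pair of blocks of sizes 3 and 1 (k = 1, ℓ = 0), the element Σ₃·Σ₁ squares to 1, so {±1, ±Σ₃Σ₁} is a group isomorphic to ℤ/2 × ℤ/2. -/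
open CliffordAlgebra QuadraticMap

section Aux

variable {A : Type*} [Ring A]

/-- If `a` anticommutes with `z` and `w`, then `a` commutes with `z * w`. -/
theorem aux_comm_single {a z w : A} (hz : a * z = -(z * a)) (hw : a * w = -(w * a)) :
    Commute a (z * w) := by
  show a * (z * w) = (z * w) * a
  calc a * (z * w) = (a * z) * w := by noncomm_ring
    _ = (-(z * a)) * w := by rw [hz]
    _ = -(z * (a * w)) := by noncomm_ring
    _ = -(z * (-(w * a))) := by rw [hw]
    _ = (z * w) * a := by noncomm_ring

/-- If `x, y` each anticommute with `z, w`, then `x * y` commutes with `z * w`. -/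
theorem aux_comm_pair {x y z w : A} (hxz : x * z = -(z * x)) (hxw : x * w = -(w * x))
    (hyz : y * z = -(z * y)) (hyw : y * w = -(w * y)) :
    Commute (x * y) (z * w) := by
  show (x * y) * (z * w) = (z * w) * (x * y)
  calc (x * y) * (z * w) = x * ((y * z) * w) := by noncomm_ring
    _ = x * ((-(z * y)) * w) := by rw [hyz]
    _ = -(((x * z) * y) * w) := by noncomm_ring
    _ = -(((-(z * x)) * y) * w) := by rw [hxz]
    _ = z * (x * (y * w)) := by noncomm_ring
    _ = z * (x * (-(w * y))) := by rw [hyw]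
    _ = -(z * ((x * w) * y)) := by noncomm_ring
    _ = -(z * ((-(w * x)) * y)) := by rw [hxw]
    _ = (z * w) * (x * y) := by noncomm_ring

/-- A product of a list of pairwise commuting involutions is an involution. -/
theorem aux_prod_sq {M : Type*} [Monoid M] :
    ∀ (L : List M), (∀ x ∈ L, ∀ y ∈ L, Commute x y) → (∀ x ∈ L, x * x = 1) →
      L.prod * L.prod = 1 := by
  intro L
  induction L with
  | nil => simp
  | cons x t ih =>
    intro hc hs
    have hxt : Commute x t.prod :=
      Commute.list_prod_right _ _ fun y hy =>
        hc x List.mem_cons_self y (List.mem_cons_of_mem _ hy)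
    have ht : t.prod * t.prod = 1 :=
      ih (fun a ha b hb => hc a (List.mem_cons_of_mem _ ha) b (List.mem_cons_of_mem _ hb))
        (fun a ha => hs a (List.mem_cons_of_mem _ ha))
    have hx : x * x = 1 := hs x List.mem_cons_self
    calc (x :: t).prod * (x :: t).prod = x * (t.prod * x) * t.prod := by
          simp [List.prod_cons, mul_assoc]
      _ = (x * x) * (t.prod * t.prod) := by rw [← hxt.eq]; noncomm_ring
      _ = 1 := by rw [hx, ht, one_mul]

end Aux

/-- Two odd-block elements `Σ = i^k • (ι v * ∏ j (1 - ι (e j) * ι (f j)))` and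
`Σ' = i^ℓ • (ι v' * ∏ j (1 - ι (e' j) * ι (f' j)))` built from mutually orthogonal
data satisfy `(Σ * Σ')² = (-1)^(k+ℓ+1)`.  In particular for blocks of sizes `3`
and `1` (`k = 1`, `ℓ = 0`) the element `Σ₃ * Σ₁` squares to `1`. -/
theorem sigma_odd_prod_sq {V : Type*} [AddCommGroup V] [Module ℂ V]
    (Q : QuadraticForm ℂ V) (k l : ℕ)
    (e f : Fin k → V) (v : V) (e' f' : Fin l → V) (v' : V)
    -- first block
    (hQe : ∀ j, Q (e j) = 0) (hQf : ∀ j, Q (f j) = 0)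
    (hef : ∀ j, polar Q (e j) (f j) = 2)
    (horth : ∀ i j, i ≠ j →
      polar Q (e i) (e j) = 0 ∧ polar Q (e i) (f j) = 0 ∧ polar Q (f i) (f j) = 0)
    (hv : Q v = 1)
    (hve : ∀ j, polar Q v (e j) = 0) (hvf : ∀ j, polar Q v (f j) = 0)
    -- second block
    (hQe' : ∀ j, Q (e' j) = 0) (hQf' : ∀ j, Q (f' j) = 0)
    (hef' : ∀ j, polar Q (e' j) (f' j) = 2)
    (horth' : ∀ i j, i ≠ j →
      polar Q (e' i) (e' j) = 0 ∧ polar Q (e' i) (f' j) = 0 ∧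
        polar Q (f' i) (f' j) = 0)
    (hv' : Q v' = 1)
    (hve' : ∀ j, polar Q v' (e' j) = 0) (hvf' : ∀ j, polar Q v' (f' j) = 0)
    -- the two blocks are mutually orthogonal
    (hvv' : polar Q v v' = 0)
    (hcross₁ : ∀ j, polar Q v (e' j) = 0 ∧ polar Q v (f' j) = 0)
    (hcross₂ : ∀ i, polar Q (e i) v' = 0 ∧ polar Q (f i) v' = 0)
    (hcross₃ : ∀ i j, polar Q (e i) (e' j) = 0 ∧ polar Q (e i) (f' j) = 0 ∧
      polar Q (f i) (e' j) = 0 ∧ polar Q (f i) (f' j) = 0)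
    (S S' : CliffordAlgebra Q)
    (hS : S = (Complex.I ^ k) •
      (ι Q v * (List.ofFn (fun j : Fin k => 1 - ι Q (e j) * ι Q (f j))).prod))
    (hS' : S' = (Complex.I ^ l) •
      (ι Q v' * (List.ofFn (fun j : Fin l => 1 - ι Q (e' j) * ι Q (f' j))).prod)) :
    (S * S') * (S * S') = (-1) ^ (k + l + 1) := by
  -- anticommutation of orthogonal vectors
  have ac : ∀ x y : V, polar Q x y = 0 → ι Q x * ι Q y = -(ι Q y * ι Q x) := by
    intro x y h
    rw [ι_mul_ι_comm, h, map_zero, zero_sub]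
  have sq0 : ∀ x : V, Q x = 0 → ι Q x * ι Q x = 0 := fun x h => by
    rw [ι_sq_scalar, h, map_zero]
  -- each factor squares to 1
  have sqfac : ∀ x y : V, Q x = 0 → Q y = 0 → polar Q x y = 2 →
      (1 - ι Q x * ι Q y) * (1 - ι Q x * ι Q y) = 1 := by
    intro x y hx hy hp
    have h2 : (algebraMap ℂ (CliffordAlgebra Q)) 2 = 2 := map_ofNat _ 2
    have hswap : ι Q y * ι Q x = 2 - ι Q x * ι Q y := by
      rw [ι_mul_ι_comm, polar_comm, hp, h2]
    have hBB : (ι Q x * ι Q y) * (ι Q x * ι Q y) = 2 * (ι Q x * ι Q y) := by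
      calc (ι Q x * ι Q y) * (ι Q x * ι Q y)
          = ι Q x * (ι Q y * ι Q x) * ι Q y := by noncomm_ring
        _ = ι Q x * (2 - ι Q x * ι Q y) * ι Q y := by rw [hswap]
        _ = 2 * (ι Q x * ι Q y) - (ι Q x * ι Q x) * (ι Q y * ι Q y) := by
            noncomm_ring
        _ = 2 * (ι Q x * ι Q y) := by rw [sq0 x hx]; noncomm_ring
    calc (1 - ι Q x * ι Q y) * (1 - ι Q x * ι Q y)
        = 1 - 2 * (ι Q x * ι Q y) + (ι Q x * ι Q y) * (ι Q x * ι Q y) := by noncomm_ring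
      _ = 1 := by rw [hBB]; noncomm_ring
  set P : CliffordAlgebra Q :=
    (List.ofFn (fun j : Fin k => 1 - ι Q (e j) * ι Q (f j))).prod with hPdef
  set P' : CliffordAlgebra Q :=
    (List.ofFn (fun j : Fin l => 1 - ι Q (e' j) * ι Q (f' j))).prod with hP'def
  set a : CliffordAlgebra Q := ι Q v with hadef
  set a' : CliffordAlgebra Q := ι Q v' with ha'def
  -- commutation facts
  have hPa : Commute a P :=
    Commute.list_prod_right _ _ (by
      intro x hx
      rw [List.mem_ofFn] at hx
      obtain ⟨j, rfl⟩ := hx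
      exact (Commute.one_right _).sub_right
        (aux_comm_single (ac _ _ (hve j)) (ac _ _ (hvf j))))
  have hPa' : Commute a' P :=
    Commute.list_prod_right _ _ (by
      intro x hx
      rw [List.mem_ofFn] at hx
      obtain ⟨j, rfl⟩ := hx
      exact (Commute.one_right _).sub_right
        (aux_comm_single (ac _ _ (by rw [polar_comm]; exact (hcross₂ j).1))
          (ac _ _ (by rw [polar_comm]; exact (hcross₂ j).2))))
  have hP'a : Commute a P' :=
    Commute.list_prod_right _ _ (by
      intro x hx
      rw [List.mem_ofFn] at hx
      obtain ⟨j, rfl⟩ := hx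
      exact (Commute.one_right _).sub_right
        (aux_comm_single (ac _ _ (hcross₁ j).1) (ac _ _ (hcross₁ j).2)))
  have hP'a' : Commute a' P' :=
    Commute.list_prod_right _ _ (by
      intro x hx
      rw [List.mem_ofFn] at hx
      obtain ⟨j, rfl⟩ := hx
      exact (Commute.one_right _).sub_right
        (aux_comm_single (ac _ _ (hve' j)) (ac _ _ (hvf' j))))
  have hPP' : Commute P P' :=
    Commute.list_prod_right _ _ (by
      intro y hy
      rw [List.mem_ofFn] at hy
      obtain ⟨j, rfl⟩ := hy
      refine Commute.list_prod_left _ _ ?_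
      intro x hx
      rw [List.mem_ofFn] at hx
      obtain ⟨i, rfl⟩ := hx
      have c : Commute (ι Q (e i) * ι Q (f i)) (ι Q (e' j) * ι Q (f' j)) :=
        aux_comm_pair (ac _ _ (hcross₃ i j).1) (ac _ _ (hcross₃ i j).2.1)
          (ac _ _ (hcross₃ i j).2.2.1) (ac _ _ (hcross₃ i j).2.2.2)
      exact (Commute.one_right _).sub_right ((Commute.one_left _).sub_left c))
  -- squares of the products
  have hPP : P * P = 1 := by
    refine aux_prod_sq _ ?_ ?_
    · intro x hx y hy
      rw [List.mem_ofFn] at hx hy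
      obtain ⟨i, rfl⟩ := hx
      obtain ⟨j, rfl⟩ := hy
      rcases eq_or_ne i j with rfl | hij
      · exact Commute.refl _
      · have c : Commute (ι Q (e i) * ι Q (f i)) (ι Q (e j) * ι Q (f j)) :=
          aux_comm_pair (ac _ _ (horth i j hij).1) (ac _ _ (horth i j hij).2.1)
            (ac _ _ (by rw [polar_comm]; exact (horth j i hij.symm).2.1))
            (ac _ _ (horth i j hij).2.2)
        exact (Commute.one_right _).sub_right ((Commute.one_left _).sub_left c)
    · intro x hx
      rw [List.mem_ofFn] at hx
      obtain ⟨j, rfl⟩ := hx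
      exact sqfac _ _ (hQe j) (hQf j) (hef j)
  have hP'P' : P' * P' = 1 := by
    refine aux_prod_sq _ ?_ ?_
    · intro x hx y hy
      rw [List.mem_ofFn] at hx hy
      obtain ⟨i, rfl⟩ := hx
      obtain ⟨j, rfl⟩ := hy
      rcases eq_or_ne i j with rfl | hij
      · exact Commute.refl _
      · have c : Commute (ι Q (e' i) * ι Q (f' i)) (ι Q (e' j) * ι Q (f' j)) :=
          aux_comm_pair (ac _ _ (horth' i j hij).1) (ac _ _ (horth' i j hij).2.1)
            (ac _ _ (by rw [polar_comm]; exact (horth' j i hij.symm).2.1))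
            (ac _ _ (horth' i j hij).2.2)
        exact (Commute.one_right _).sub_right ((Commute.one_left _).sub_left c)
    · intro x hx
      rw [List.mem_ofFn] at hx
      obtain ⟨j, rfl⟩ := hx
      exact sqfac _ _ (hQe' j) (hQf' j) (hef' j)
  -- vector squares and anticommutation
  have ha : a * a = 1 := by rw [hadef, ι_sq_scalar, hv, map_one]
  have ha' : a' * a' = 1 := by rw [ha'def, ι_sq_scalar, hv', map_one]
  have haa' : a * a' = -(a' * a) := ac _ _ hvv'
  have ha'a : a' * a = -(a * a') := by rw [haa', neg_neg]
  -- the core computation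
  have hZ : (a * P) * (a' * P') = (a * a') * (P * P') := by
    calc (a * P) * (a' * P') = a * ((P * a') * P') := by noncomm_ring
      _ = a * ((a' * P) * P') := by rw [← hPa'.eq]
      _ = (a * a') * (P * P') := by noncomm_ring
  have hcW : Commute (a * a') (P * P') :=
    (hPa.mul_right hP'a).mul_left (hPa'.mul_right hP'a')
  have hWW : (P * P') * (P * P') = 1 := by
    calc (P * P') * (P * P') = P * ((P' * P) * P') := by noncomm_ring
      _ = P * ((P * P') * P') := by rw [← hPP'.eq]
      _ = (P * P) * (P' * P') := by noncomm_ring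
      _ = 1 := by rw [hPP, hP'P', one_mul]
  have haa : (a * a') * (a * a') = -1 := by
    calc (a * a') * (a * a') = a * ((a' * a) * a') := by noncomm_ring
      _ = a * ((-(a * a')) * a') := by rw [ha'a]
      _ = -((a * a) * (a' * a')) := by noncomm_ring
      _ = -1 := by rw [ha, ha', one_mul]
  have hZZ : ((a * P) * (a' * P')) * ((a * P) * (a' * P')) = -1 := by
    rw [hZ]
    calc (a * a') * (P * P') * ((a * a') * (P * P'))
        = (a * a') * ((P * P') * (a * a')) * (P * P') := by noncomm_ring
      _ = (a * a') * ((a * a') * (P * P')) * (P * P') := by rw [← hcW.eq]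
      _ = ((a * a') * (a * a')) * ((P * P') * (P * P')) := by noncomm_ring
      _ = -1 := by rw [haa, hWW, mul_one]
  -- assemble
  rw [hS, hS', smul_mul_smul_comm, smul_mul_smul_comm, hZZ]
  have hsc : Complex.I ^ k * Complex.I ^ l * (Complex.I ^ k * Complex.I ^ l)
      = (-1 : ℂ) ^ (k + l) := by
    rw [← pow_add, ← pow_add, ← two_mul, pow_mul, Complex.I_sq]
  have hneg : (algebraMap ℂ (CliffordAlgebra Q)) (-1) = -1 := by simp
  rw [hsc, Algebra.smul_def, map_pow, hneg, pow_succ, mul_neg, mul_one]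
end

section
/- Let Σ and Σ' be two odd-block elements built from mutually orthogonal data (a unit vector v with k hyperbolic pairs, and a unit vector v' with ℓ hyperbolic pairs). Then the even element P := Σ * Σ' satisfies P * star P = 1, and P * ι u * star P = −ι u for every u in the ℂ-span of {v, e₁, f₁, …, e_k, f_k} ∪ {v', e'₁, f'₁, …, e'_ℓ, f'_ℓ}, while P * ι u * star P = ι u for every vector u orthogonal to all of these vectors. (Thus the even product of two odd-block elements acts by −Id exactly on the two blocks.) -/
/-!
An odd block `Σ = iᵏ • ι v * ∏ⱼ (1 - ι eⱼ * ι fⱼ)` satisfies `Σ * star Σ = -1`: each factor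
`x = 1 - ι e * ι f` has `x * star x = 1 - (ι e ι f + ι f ι e) + Q f • (ι e)² = -1`, the `iᵏ`
cancels the resulting sign `(-1)ᵏ`, and `ι v * star (ι v) = -Q v = -1`. Moreover `Σ` commutes
with `ι` of each vector of its own block (both `ι v` and the single factor involving `eⱼ` or
`fⱼ` anticommute with it) and anticommutes with `ι u` for `u` orthogonal to the block.
For `x * star x = -1`, the conjugation `y ↦ x * y * star x` is `-1` on elements commuting with
`x` and `+1` on elements anticommuting with it, so `P = Σ * Σ'` acts by `(-1)(+1)` on either
block and by `(+1)(+1)` on their orthogonal complement, while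
`P * star P = Σ * (-1) * star Σ = 1`.
-/

open CliffordAlgebra QuadraticMap

section StarRing

variable {R : Type*} [Ring R] [StarRing R] {x y : R}

theorem mul_mul_star_eq_neg_of_commute (hx : x * star x = -1) (h : Commute x y) :
    x * y * star x = -y := by
  rw [h.eq, mul_assoc, hx, mul_neg_one]

theorem mul_mul_star_eq_self_of_semiconjBy_neg (hx : x * star x = -1)
    (h : SemiconjBy x y (-y)) : x * y * star x = y := by
  rw [h.eq, mul_assoc, hx, neg_mul_neg, mul_one]

theorem List.prod_mul_star_prod_eq_neg_one_pow {l : List R}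
    (hl : ∀ x ∈ l, x * star x = -1) : l.prod * star l.prod = (-1) ^ l.length := by
  induction l with
  | nil => simp
  | cons x l ih =>
    rw [List.forall_mem_cons] at hl
    calc (x :: l).prod * star (x :: l).prod = x * (l.prod * star l.prod) * star x := by
          rw [List.prod_cons, star_mul]; noncomm_ring
      _ = (-1) ^ l.length * (x * star x) := by
          rw [ih hl.2, ((Commute.neg_one_right x).pow_right _).eq, mul_assoc]
      _ = (-1) ^ (x :: l).length := by rw [hl.1, List.length_cons, pow_succ]

end StarRing

theorem semiconjBy_prod_ofFn_neg {R : Type*} [Ring R] {n : ℕ} (x : Fin n → R) {y : R}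
    (j : Fin n) (hj : SemiconjBy (x j) y (-y)) (hx : ∀ i ≠ j, Commute (x i) y) :
    SemiconjBy (List.ofFn x).prod y (-y) := by
  induction n with
  | zero => exact j.elim0
  | succ n ih =>
    rw [List.ofFn_succ, List.prod_cons]
    cases j using Fin.cases with
    | zero =>
      refine hj.mul_left (Commute.list_prod_left _ _ ?_)
      simpa [List.mem_ofFn] using fun i => hx i.succ (Fin.succ_ne_zero i)
    | succ j =>
      exact SemiconjBy.mul_left (hx 0 (Fin.succ_ne_zero j).symm).neg_right
        (ih _ j hj fun i hi => hx i.succ (Fin.succ_injective _ |>.ne hi))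

namespace CliffordAlgebra

section CommRing

variable {R M : Type*} [CommRing R] [AddCommGroup M] [Module R M] {Q : QuadraticForm R M}
  {a b u : M}

theorem mul_ι_mul_eq_neg_of_mem_span {x y : CliffordAlgebra Q} {s : Set M}
    (h : ∀ u ∈ s, x * ι Q u * y = -ι Q u) (hu : u ∈ Submodule.span R s) :
    x * ι Q u * y = -ι Q u := by
  induction hu using Submodule.span_induction with
  | mem u hu => exact h u hu
  | zero => simp
  | add u w _ _ hu hw => rw [map_add, mul_add, add_mul, hu, hw, neg_add]
  | smul r u _ hu => rw [map_smul, mul_smul_comm, smul_mul_assoc, hu, smul_neg]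

theorem semiconjBy_ι_neg_of_polar_eq_zero (h : polar Q a b = 0) :
    SemiconjBy (ι Q a) (ι Q b) (-ι Q b) := by
  rw [SemiconjBy, neg_mul]
  exact ι_mul_ι_comm_of_isOrtho (isOrtho_polarBilin.mp h)

theorem commute_ι_mul_of_semiconjBy_neg {x : CliffordAlgebra Q} (h : polar Q a u = 0)
    (hx : SemiconjBy x (ι Q u) (-ι Q u)) : Commute (ι Q a * x) (ι Q u) := by
  have h' := (semiconjBy_ι_neg_of_polar_eq_zero h).neg_right.mul_left hx
  rwa [neg_neg] at h'

theorem commute_one_sub_ι_mul_ι (ha : polar Q u a = 0) (hb : polar Q u b = 0) :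
    Commute (1 - ι Q a * ι Q b) (ι Q u) :=
  (Commute.one_left _).sub_left <| commute_ι_mul_of_semiconjBy_neg
    ((polar_comm _ _ _).trans ha)
    (semiconjBy_ι_neg_of_polar_eq_zero ((polar_comm _ _ _).trans hb))

theorem ι_mul_ι_add_swap_of_polar_eq_two (hab : polar Q a b = 2) :
    ι Q a * ι Q b + ι Q b * ι Q a = 2 := by
  rw [ι_mul_ι_add_swap, hab, map_ofNat]

theorem one_sub_ι_mul_ι_mul_star_self (hb : Q b = 0) (hab : polar Q a b = 2) :
    (1 - ι Q a * ι Q b) * star (1 - ι Q a * ι Q b) = -1 := by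
  have hbb : ι Q b * ι Q b = 0 := by rw [ι_sq_scalar, hb, map_zero]
  calc (1 - ι Q a * ι Q b) * star (1 - ι Q a * ι Q b)
      = 1 - (ι Q a * ι Q b + ι Q b * ι Q a) + ι Q a * (ι Q b * ι Q b) * ι Q a := by
        rw [star_sub, star_one, star_mul, star_ι, star_ι, neg_mul_neg]; noncomm_ring
    _ = -1 := by rw [ι_mul_ι_add_swap_of_polar_eq_two hab, hbb]; norm_num

theorem semiconjBy_one_sub_ι_mul_ι_left (hab : polar Q a b = 2) :
    SemiconjBy (1 - ι Q a * ι Q b) (ι Q a) (-ι Q a) := by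
  rw [SemiconjBy, neg_mul]
  refine eq_neg_of_add_eq_zero_left ?_
  calc (1 - ι Q a * ι Q b) * ι Q a + ι Q a * (1 - ι Q a * ι Q b)
      = 2 * ι Q a - ι Q a * (ι Q a * ι Q b + ι Q b * ι Q a) := by noncomm_ring
    _ = 0 := by rw [ι_mul_ι_add_swap_of_polar_eq_two hab, two_mul, mul_two, sub_self]

theorem semiconjBy_one_sub_ι_mul_ι_right (hab : polar Q a b = 2) :
    SemiconjBy (1 - ι Q a * ι Q b) (ι Q b) (-ι Q b) := by
  rw [SemiconjBy, neg_mul]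
  refine eq_neg_of_add_eq_zero_left ?_
  calc (1 - ι Q a * ι Q b) * ι Q b + ι Q b * (1 - ι Q a * ι Q b)
      = 2 * ι Q b - (ι Q a * ι Q b + ι Q b * ι Q a) * ι Q b := by noncomm_ring
    _ = 0 := by rw [ι_mul_ι_add_swap_of_polar_eq_two hab, sub_self]

end CommRing

section OddBlock

variable {V : Type*} [AddCommGroup V] [Module ℂ V] {Q : QuadraticForm ℂ V}

noncomputable def oddBlock (Q : QuadraticForm ℂ V) {k : ℕ} (v : V) (e f : Fin k → V) :
    CliffordAlgebra Q :=
  Complex.I ^ k • (ι Q v * (List.ofFn fun j => 1 - ι Q (e j) * ι Q (f j)).prod)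

variable {k : ℕ} {v u : V} {e f : Fin k → V}

theorem oddBlock_mul_star_self (hv : Q v = 1) (hQf : ∀ j, Q (f j) = 0)
    (hef : ∀ j, polar Q (e j) (f j) = 2) :
    oddBlock Q v e f * star (oddBlock Q v e f) = -1 := by
  set B := (List.ofFn fun j => 1 - ι Q (e j) * ι Q (f j)).prod
  have hB : B * star B = (-1) ^ k := by
    simpa using List.prod_mul_star_prod_eq_neg_one_pow
      (l := List.ofFn fun j => 1 - ι Q (e j) * ι Q (f j))
      (by simpa [List.mem_ofFn] using fun j => one_sub_ι_mul_ι_mul_star_self (hQf j) (hef j))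
  have hv' : ι Q v * star (ι Q v) = -1 := by rw [star_ι, mul_neg, ι_sq_scalar, hv, map_one]
  calc oddBlock Q v e f * star (oddBlock Q v e f)
      = (Complex.I ^ k * Complex.I ^ k) • (ι Q v * (B * star B) * star (ι Q v)) := by
        rw [oddBlock, star_smul, smul_mul_smul_comm, star_mul, mul_assoc, mul_assoc, mul_assoc]
    _ = -1 := by
        rw [hB, ((Commute.neg_one_right _).pow_right _).eq, mul_assoc, hv', ← mul_pow,
          Complex.I_mul_I, Algebra.smul_def, map_pow, map_neg, map_one, ← mul_assoc,
          ← pow_add, Even.neg_one_pow ⟨k, rfl⟩, one_mul]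

theorem commute_prod_one_sub_ι_mul_ι (he : ∀ j, polar Q u (e j) = 0)
    (hf : ∀ j, polar Q u (f j) = 0) :
    Commute (List.ofFn fun j => 1 - ι Q (e j) * ι Q (f j)).prod (ι Q u) :=
  Commute.list_prod_left _ _ (by
    simpa [List.mem_ofFn] using fun j => commute_one_sub_ι_mul_ι (he j) (hf j))

theorem commute_oddBlock_ι_of_mem (hef : ∀ j, polar Q (e j) (f j) = 2)
    (horth : ∀ i j, i ≠ j →
      polar Q (e i) (e j) = 0 ∧ polar Q (e i) (f j) = 0 ∧ polar Q (f i) (f j) = 0)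
    (hve : ∀ j, polar Q v (e j) = 0) (hvf : ∀ j, polar Q v (f j) = 0)
    (hu : u ∈ {v} ∪ Set.range e ∪ Set.range f) :
    Commute (oddBlock Q v e f) (ι Q u) := by
  refine Commute.smul_left ?_ _
  rcases hu with (rfl | ⟨j, rfl⟩) | ⟨j, rfl⟩
  · exact (Commute.refl _).mul_left (commute_prod_one_sub_ι_mul_ι hve hvf)
  · refine commute_ι_mul_of_semiconjBy_neg (hve j) (semiconjBy_prod_ofFn_neg _ j
      (semiconjBy_one_sub_ι_mul_ι_left (hef j)) fun i hij => ?_)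
    exact commute_one_sub_ι_mul_ι (horth j i hij.symm).1 (horth j i hij.symm).2.1
  · refine commute_ι_mul_of_semiconjBy_neg (hvf j) (semiconjBy_prod_ofFn_neg _ j
      (semiconjBy_one_sub_ι_mul_ι_right (hef j)) fun i hij => ?_)
    exact commute_one_sub_ι_mul_ι ((polar_comm _ _ _).trans (horth i j hij).2.1)
      (horth j i hij.symm).2.2

theorem semiconjBy_oddBlock_ι_neg
    (hu : ∀ w ∈ {v} ∪ Set.range e ∪ Set.range f, polar Q u w = 0) :
    SemiconjBy (oddBlock Q v e f) (ι Q u) (-ι Q u) :=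
  SemiconjBy.smul_left (SemiconjBy.mul_left
    (semiconjBy_ι_neg_of_polar_eq_zero ((polar_comm _ _ _).trans (hu v (.inl (.inl rfl)))))
    (commute_prod_one_sub_ι_mul_ι (fun j => hu _ (.inl (.inr ⟨j, rfl⟩)))
      fun j => hu _ (.inr ⟨j, rfl⟩))) _

end OddBlock

end CliffordAlgebra

theorem sigma_odd_prod_action_general {V : Type*} [AddCommGroup V] [Module ℂ V]
    (Q : QuadraticForm ℂ V) (k l : ℕ)
    (e f : Fin k → V) (v : V) (e' f' : Fin l → V) (v' : V)
    -- first block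
    (hQf : ∀ j, Q (f j) = 0)
    (hef : ∀ j, polar Q (e j) (f j) = 2)
    (horth : ∀ i j, i ≠ j →
      polar Q (e i) (e j) = 0 ∧ polar Q (e i) (f j) = 0 ∧ polar Q (f i) (f j) = 0)
    (hv : Q v = 1)
    (hve : ∀ j, polar Q v (e j) = 0) (hvf : ∀ j, polar Q v (f j) = 0)
    -- second block
    (hQf' : ∀ j, Q (f' j) = 0)
    (hef' : ∀ j, polar Q (e' j) (f' j) = 2)
    (horth' : ∀ i j, i ≠ j →
      polar Q (e' i) (e' j) = 0 ∧ polar Q (e' i) (f' j) = 0 ∧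
        polar Q (f' i) (f' j) = 0)
    (hv' : Q v' = 1)
    (hve' : ∀ j, polar Q v' (e' j) = 0) (hvf' : ∀ j, polar Q v' (f' j) = 0)
    -- the two blocks are mutually orthogonal
    (hvv' : polar Q v v' = 0)
    (hcross₁ : ∀ j, polar Q v (e' j) = 0 ∧ polar Q v (f' j) = 0)
    (hcross₂ : ∀ i, polar Q (e i) v' = 0 ∧ polar Q (f i) v' = 0)
    (hcross₃ : ∀ i j, polar Q (e i) (e' j) = 0 ∧ polar Q (e i) (f' j) = 0 ∧
      polar Q (f i) (e' j) = 0 ∧ polar Q (f i) (f' j) = 0)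
    (S S' : CliffordAlgebra Q)
    (hS : S = (Complex.I ^ k) •
      (ι Q v * (List.ofFn (fun j : Fin k => 1 - ι Q (e j) * ι Q (f j))).prod))
    (hS' : S' = (Complex.I ^ l) •
      (ι Q v' * (List.ofFn (fun j : Fin l => 1 - ι Q (e' j) * ι Q (f' j))).prod)) :
    (S * S') * star (S * S') = 1 ∧
    (∀ u ∈ Submodule.span ℂ
        (({v} ∪ Set.range e ∪ Set.range f) ∪ ({v'} ∪ Set.range e' ∪ Set.range f')),
      (S * S') * ι Q u * star (S * S') = -(ι Q u)) ∧
    (∀ u : V, polar Q u v = 0 → polar Q u v' = 0 →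
      (∀ j, polar Q u (e j) = 0) → (∀ j, polar Q u (f j) = 0) →
      (∀ j, polar Q u (e' j) = 0) → (∀ j, polar Q u (f' j) = 0) →
      (S * S') * ι Q u * star (S * S') = ι Q u) := by
  obtain rfl : S = oddBlock Q v e f := hS
  obtain rfl : S' = oddBlock Q v' e' f' := hS'
  set S := oddBlock Q v e f
  set S' := oddBlock Q v' e' f'
  have hS₁ := oddBlock_mul_star_self hv hQf hef
  have hS₂ := oddBlock_mul_star_self hv' hQf' hef'
  have hconj : ∀ y, S * S' * y * star (S * S') = S * (S' * y * star S') * star S := by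
    intro y; simp only [star_mul, mul_assoc]
  have hperp : ∀ u ∈ {v} ∪ Set.range e ∪ Set.range f,
      ∀ w ∈ {v'} ∪ Set.range e' ∪ Set.range f', polar Q u w = 0 := by
    rintro u ((rfl | ⟨i, rfl⟩) | ⟨i, rfl⟩) w ((rfl | ⟨j, rfl⟩) | ⟨j, rfl⟩)
    exacts [hvv', (hcross₁ j).1, (hcross₁ j).2, (hcross₂ i).1, (hcross₃ i j).1,
      (hcross₃ i j).2.1, (hcross₂ i).2, (hcross₃ i j).2.2.1, (hcross₃ i j).2.2.2]
  refine ⟨?_, ?_, ?_⟩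
  · calc S * S' * star (S * S') = S * (S' * 1 * star S') * star S := by rw [← hconj, mul_one]
      _ = 1 := by rw [mul_one, hS₂, mul_neg_one, neg_mul, hS₁, neg_neg]
  · intro u hu
    refine mul_ι_mul_eq_neg_of_mem_span (fun u hu => ?_) hu
    rw [hconj]
    rcases hu with hu | hu
    · rw [mul_mul_star_eq_self_of_semiconjBy_neg hS₂ (semiconjBy_oddBlock_ι_neg (hperp u hu)),
        mul_mul_star_eq_neg_of_commute hS₁ (commute_oddBlock_ι_of_mem hef horth hve hvf hu)]
    · rw [mul_mul_star_eq_neg_of_commute hS₂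
          (commute_oddBlock_ι_of_mem hef' horth' hve' hvf' hu), mul_neg, neg_mul,
        mul_mul_star_eq_self_of_semiconjBy_neg hS₁ (semiconjBy_oddBlock_ι_neg
          fun w hw => (polar_comm _ _ _).trans (hperp w hw u hu))]
  · intro u huv huv' hue huf hue' huf'
    rw [hconj, mul_mul_star_eq_self_of_semiconjBy_neg hS₂ (semiconjBy_oddBlock_ι_neg ?_),
      mul_mul_star_eq_self_of_semiconjBy_neg hS₁ (semiconjBy_oddBlock_ι_neg ?_)]
    · rintro w ((rfl | ⟨j, rfl⟩) | ⟨j, rfl⟩)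
      exacts [huv, hue j, huf j]
    · rintro w ((rfl | ⟨j, rfl⟩) | ⟨j, rfl⟩)
      exacts [huv', hue' j, huf' j]

/-- Two odd-block elements `Σ = i^k • (ι v * ∏ j (1 - ι (e j) * ι (f j)))` and
`Σ' = i^ℓ • (ι v' * ∏ j (1 - ι (e' j) * ι (f' j)))` built from mutually orthogonal
data: the even element `P = Σ * Σ'` satisfies `P * star P = 1`, acts by `-1` on
`ι u` for every `u` in the `ℂ`-span of the vectors of the two blocks, and fixes
`ι u` for every vector `u` orthogonal to all of them. -/
theorem sigma_odd_prod_action {V : Type*} [AddCommGroup V] [Module ℂ V]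
    (Q : QuadraticForm ℂ V) (k l : ℕ)
    (e f : Fin k → V) (v : V) (e' f' : Fin l → V) (v' : V)
    -- first block
    (hQe : ∀ j, Q (e j) = 0) (hQf : ∀ j, Q (f j) = 0)
    (hef : ∀ j, polar Q (e j) (f j) = 2)
    (horth : ∀ i j, i ≠ j →
      polar Q (e i) (e j) = 0 ∧ polar Q (e i) (f j) = 0 ∧ polar Q (f i) (f j) = 0)
    (hv : Q v = 1)
    (hve : ∀ j, polar Q v (e j) = 0) (hvf : ∀ j, polar Q v (f j) = 0)
    -- second block
    (hQe' : ∀ j, Q (e' j) = 0) (hQf' : ∀ j, Q (f' j) = 0)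
    (hef' : ∀ j, polar Q (e' j) (f' j) = 2)
    (horth' : ∀ i j, i ≠ j →
      polar Q (e' i) (e' j) = 0 ∧ polar Q (e' i) (f' j) = 0 ∧
        polar Q (f' i) (f' j) = 0)
    (hv' : Q v' = 1)
    (hve' : ∀ j, polar Q v' (e' j) = 0) (hvf' : ∀ j, polar Q v' (f' j) = 0)
    -- the two blocks are mutually orthogonal
    (hvv' : polar Q v v' = 0)
    (hcross₁ : ∀ j, polar Q v (e' j) = 0 ∧ polar Q v (f' j) = 0)
    (hcross₂ : ∀ i, polar Q (e i) v' = 0 ∧ polar Q (f i) v' = 0)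
    (hcross₃ : ∀ i j, polar Q (e i) (e' j) = 0 ∧ polar Q (e i) (f' j) = 0 ∧
      polar Q (f i) (e' j) = 0 ∧ polar Q (f i) (f' j) = 0)
    (S S' : CliffordAlgebra Q)
    (hS : S = (Complex.I ^ k) •
      (ι Q v * (List.ofFn (fun j : Fin k => 1 - ι Q (e j) * ι Q (f j))).prod))
    (hS' : S' = (Complex.I ^ l) •
      (ι Q v' * (List.ofFn (fun j : Fin l => 1 - ι Q (e' j) * ι Q (f' j))).prod)) :
    (S * S') * star (S * S') = 1 ∧
    (∀ u ∈ Submodule.span ℂ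
        (({v} ∪ Set.range e ∪ Set.range f) ∪ ({v'} ∪ Set.range e' ∪ Set.range f')),
      (S * S') * ι Q u * star (S * S') = -(ι Q u)) ∧
    (∀ u : V, polar Q u v = 0 → polar Q u v' = 0 →
      (∀ j, polar Q u (e j) = 0) → (∀ j, polar Q u (f j) = 0) →
      (∀ j, polar Q u (e' j) = 0) → (∀ j, polar Q u (f' j) = 0) →
      (S * S') * ι Q u * star (S * S') = ι Q u) :=
  sigma_odd_prod_action_general Q k l e f v e' f' v' hQf hef horth hv hve hvf hQf' hef' horth' hv'
    hve' hvf' hvv' hcross₁ hcross₂ hcross₃ S S' hS hS'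
end

section
/- Let (e₁, f₁) and (e₂, f₂) be two mutually orthogonal hyperbolic pairs, and set H_m := (1 − ι e_m * ι f_m)/2 for m = 1, 2 (the Cartan elements H(ε_m)). Then, with ⁅x, y⁆ := x*y − y*x: (a) ⁅H₁, H₂⁆ = 0; (b) ⁅H₁, ι f₁ * ι f₂ / 2⁆ = ι f₁ * ι f₂ / 2 and ⁅H₂, ι f₁ * ι f₂ / 2⁆ = ι f₁ * ι f₂ / 2; (c) ⁅H₁, ι e₁ * ι f₂ / 2⁆ = −ι e₁ * ι f₂ / 2 and ⁅H₂, ι e₁ * ι f₂ / 2⁆ = ι e₁ * ι f₂ / 2; (d) ⁅H₁, ι e₁ * ι e₂ / 2⁆ = −ι e₁ * ι e₂ / 2 and ⁅H₂, ι e₁ * ι e₂ / 2⁆ = −ι e₁ * ι e₂ / 2. (These verify that f_if_j/2, e_if_j/2, e_ie_j/2 realize the root vectors X(ε_i+ε_j), X(−ε_i+ε_j), X(−ε_i−ε_j) of so(2n) inside the Clifford algebra.) -/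
/-!
`ι x * ι y` acts on vectors by `⁅ι x * ι y, ι z⁆ = polar y z • ι x - polar x z • ι y`, so `ad Hₘ`
scales `ι fₘ` by `1`, `ι eₘ` by `-1` and kills `ι v` for `v` orthogonal to `eₘ` and `fₘ`.
Since `ad Hₘ` is a derivation, these eigenvalues add up on products of two vectors.
-/

open CliffordAlgebra QuadraticMap

namespace Ring

variable {R A : Type*} [CommRing R] [Ring A] [Algebra R A]

theorem smul_lie (c : R) (x y : A) : ⁅c • x, y⁆ = c • ⁅x, y⁆ := by
  rw [lie_def, lie_def, smul_mul_assoc, mul_smul_comm, smul_sub]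

theorem lie_smul (c : R) (x y : A) : ⁅x, c • y⁆ = c • ⁅x, y⁆ := by
  rw [lie_def, lie_def, smul_mul_assoc, mul_smul_comm, smul_sub]

theorem lie_mul_eq_smul_of_lie_eq_smul {h x y : A} {α β : R} (hx : ⁅h, x⁆ = α • x)
    (hy : ⁅h, y⁆ = β • y) : ⁅h, x * y⁆ = (α + β) • (x * y) := by
  have leibniz : ⁅h, x * y⁆ = ⁅h, x⁆ * y + x * ⁅h, y⁆ := by
    simp only [lie_def]
    noncomm_ring
  rw [leibniz, hx, hy, smul_mul_assoc, mul_smul_comm, add_smul]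

end Ring

namespace CliffordAlgebra

theorem lie_ι_mul_ι_ι {R M : Type*} [CommRing R] [AddCommGroup M] [Module R M]
    {Q : QuadraticForm R M} (x y z : M) :
    ⁅ι Q x * ι Q y, ι Q z⁆ = polar Q y z • ι Q x - polar Q x z • ι Q y := by
  rw [Ring.lie_def, mul_assoc, ι_mul_ι_comm y z, ← mul_assoc (ι Q z), ι_mul_ι_comm z x,
    polar_comm Q z x]
  simp only [mul_sub, sub_mul, Algebra.smul_def, Algebra.commutes, mul_assoc]
  abel

variable {K M : Type*} [Field K] [AddCommGroup M] [Module K M]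

/-- The Cartan element `H(ε)` attached to a hyperbolic pair `(e, f)`. -/
def cartanElement (Q : QuadraticForm K M) (e f : M) : CliffordAlgebra Q :=
  (2⁻¹ : K) • (1 - ι Q e * ι Q f)

variable {Q : QuadraticForm K M} {e f : M}

theorem cartanElement_lie_ι (z : M) :
    ⁅cartanElement Q e f, ι Q z⁆ = (2⁻¹ : K) • (polar Q e z • ι Q f - polar Q f z • ι Q e) := by
  rw [cartanElement, Ring.smul_lie, ← neg_sub (polar Q f z • ι Q e), ← lie_ι_mul_ι_ι]
  congr 1
  simp only [Ring.lie_def]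
  noncomm_ring

theorem cartanElement_lie_ι_left [NeZero (2 : K)] (hQe : Q e = 0) (hef : polar Q e f = 2) :
    ⁅cartanElement Q e f, ι Q e⁆ = (-1 : K) • ι Q e := by
  rw [cartanElement_lie_ι, polar_self, hQe, polar_comm, hef, smul_zero, zero_smul, zero_sub,
    smul_neg, smul_smul, inv_mul_cancel₀ two_ne_zero, one_smul, neg_one_smul]

theorem cartanElement_lie_ι_right [NeZero (2 : K)] (hQf : Q f = 0) (hef : polar Q e f = 2) :
    ⁅cartanElement Q e f, ι Q f⁆ = (1 : K) • ι Q f := by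
  rw [cartanElement_lie_ι, polar_self, hQf, hef, smul_zero, zero_smul, sub_zero, smul_smul,
    inv_mul_cancel₀ two_ne_zero]

theorem cartanElement_lie_ι_of_polar_eq_zero {z : M} (hez : polar Q e z = 0)
    (hfz : polar Q f z = 0) : ⁅cartanElement Q e f, ι Q z⁆ = (0 : K) • ι Q z := by
  rw [cartanElement_lie_ι, hez, hfz, zero_smul, zero_smul, sub_zero, smul_zero, zero_smul]

end CliffordAlgebra

/-- For two mutually orthogonal hyperbolic pairs `(e₁, f₁)`, `(e₂, f₂)` and the
Cartan elements `Hₘ = (1 - ι eₘ * ι fₘ)/2`, the commutators with the degree-two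
elements `ι f₁ * ι f₂ / 2`, `ι e₁ * ι f₂ / 2`, `ι e₁ * ι e₂ / 2` realize the root
vectors `X(ε₁+ε₂)`, `X(-ε₁+ε₂)`, `X(-ε₁-ε₂)` of `so(2n)`. -/
theorem clifford_root_vectors {V : Type*} [AddCommGroup V] [Module ℂ V]
    (Q : QuadraticForm ℂ V) (e₁ f₁ e₂ f₂ : V)
    (hQe₁ : Q e₁ = 0) (hQf₁ : Q f₁ = 0) (hef₁ : polar Q e₁ f₁ = 2)
    (hQe₂ : Q e₂ = 0) (hQf₂ : Q f₂ = 0) (hef₂ : polar Q e₂ f₂ = 2)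
    (h₁ : polar Q e₁ e₂ = 0) (h₂ : polar Q e₁ f₂ = 0)
    (h₃ : polar Q f₁ e₂ = 0) (h₄ : polar Q f₁ f₂ = 0)
    (H₁ H₂ : CliffordAlgebra Q)
    (hH₁ : H₁ = (2⁻¹ : ℂ) • (1 - ι Q e₁ * ι Q f₁))
    (hH₂ : H₂ = (2⁻¹ : ℂ) • (1 - ι Q e₂ * ι Q f₂)) :
    ⁅H₁, H₂⁆ = 0 ∧
    ⁅H₁, (2⁻¹ : ℂ) • (ι Q f₁ * ι Q f₂)⁆ = (2⁻¹ : ℂ) • (ι Q f₁ * ι Q f₂) ∧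
    ⁅H₂, (2⁻¹ : ℂ) • (ι Q f₁ * ι Q f₂)⁆ = (2⁻¹ : ℂ) • (ι Q f₁ * ι Q f₂) ∧
    ⁅H₁, (2⁻¹ : ℂ) • (ι Q e₁ * ι Q f₂)⁆ = -((2⁻¹ : ℂ) • (ι Q e₁ * ι Q f₂)) ∧
    ⁅H₂, (2⁻¹ : ℂ) • (ι Q e₁ * ι Q f₂)⁆ = (2⁻¹ : ℂ) • (ι Q e₁ * ι Q f₂) ∧
    ⁅H₁, (2⁻¹ : ℂ) • (ι Q e₁ * ι Q e₂)⁆ = -((2⁻¹ : ℂ) • (ι Q e₁ * ι Q e₂)) ∧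
    ⁅H₂, (2⁻¹ : ℂ) • (ι Q e₁ * ι Q e₂)⁆ = -((2⁻¹ : ℂ) • (ι Q e₁ * ι Q e₂)) := by
  replace hH₁ : H₁ = cartanElement Q e₁ f₁ := hH₁
  replace hH₂ : H₂ = cartanElement Q e₂ f₂ := hH₂
  subst hH₁ hH₂
  have h₁e₁ := cartanElement_lie_ι_left (f := f₁) hQe₁ hef₁
  have h₁f₁ := cartanElement_lie_ι_right (e := e₁) hQf₁ hef₁
  have h₁e₂ := cartanElement_lie_ι_of_polar_eq_zero h₁ h₃
  have h₁f₂ := cartanElement_lie_ι_of_polar_eq_zero h₂ h₄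
  have h₂e₂ := cartanElement_lie_ι_left (f := f₂) hQe₂ hef₂
  have h₂f₂ := cartanElement_lie_ι_right (e := e₂) hQf₂ hef₂
  have h₂e₁ := cartanElement_lie_ι_of_polar_eq_zero (polar_comm Q e₁ e₂ ▸ h₁)
    (polar_comm Q e₁ f₂ ▸ h₂)
  have h₂f₁ := cartanElement_lie_ι_of_polar_eq_zero (polar_comm Q f₁ e₂ ▸ h₃)
    (polar_comm Q f₁ f₂ ▸ h₄)
  refine ⟨?_, ?_, ?_, ?_, ?_, ?_, ?_⟩
  · have hcomm : Commute (cartanElement Q e₁ f₁) (ι Q e₂ * ι Q f₂) := commute_iff_lie_eq.mpr <| by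
      rw [Ring.lie_mul_eq_smul_of_lie_eq_smul h₁e₂ h₁f₂, add_zero, zero_smul]
    exact (((Commute.one_right _).sub_right hcomm).smul_right _).lie_eq
  · rw [Ring.lie_smul, Ring.lie_mul_eq_smul_of_lie_eq_smul h₁f₁ h₁f₂]; module
  · rw [Ring.lie_smul, Ring.lie_mul_eq_smul_of_lie_eq_smul h₂f₁ h₂f₂]; module
  · rw [Ring.lie_smul, Ring.lie_mul_eq_smul_of_lie_eq_smul h₁e₁ h₁f₂]; module
  · rw [Ring.lie_smul, Ring.lie_mul_eq_smul_of_lie_eq_smul h₂e₁ h₂f₂]; module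
  · rw [Ring.lie_smul, Ring.lie_mul_eq_smul_of_lie_eq_smul h₁e₁ h₁e₂]; module
  · rw [Ring.lie_smul, Ring.lie_mul_eq_smul_of_lie_eq_smul h₂e₁ h₂e₂]; module
end
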